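/- arXiv:1907.06352 — 6 statements merged into one kernel-verified Lean document; each statement's English description precedes it below -/
import Mathlib

section
/- Let U ⊆ ℝⁿ be open, let φ : U → ℝ be smooth with Hessian matrix G(x) invertible at every x ∈ U, and set H(x) := G(x)⁻¹. Let a, α ∈ ℝⁿ and define w : U → ℝ by w(x) = exp(−⟨α, ∇φ(x)⟩). Then for every x ∈ U, −Σ_{i,j} ∂_{x_i}(H_{ij} ∂_{x_j} w)(x) + 2 Σ_{i,j} a_i H_{ij}(x) ∂_{x_j} w(x) = −(⟨α, G(x)α⟩ + 2⟨α,a⟩) · w(x). -/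
/-- Partial derivative of `f` in the `j`-th coordinate direction at `x`. -/
noncomputable def pd {n : ℕ} (f : (Fin n → ℝ) → ℝ) (j : Fin n) (x : Fin n → ℝ) : ℝ :=
  fderiv ℝ f x (Pi.single j 1)

lemma pd_contDiffAt {n : ℕ} {f : (Fin n → ℝ) → ℝ} {x : Fin n → ℝ}
    (hf : ContDiffAt ℝ (⊤ : ℕ∞) f x) (j : Fin n) : ContDiffAt ℝ (⊤ : ℕ∞) (pd f j) x := by
  have h1 : ContDiffAt ℝ (⊤ : ℕ∞) (fderiv ℝ f) x := hf.fderiv_right (by simp)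
  exact h1.clm_apply contDiffAt_const

lemma contDiffAt_finset_prod {n : ℕ} {ι : Type*} {s : Finset ι}
    {f : ι → (Fin n → ℝ) → ℝ} {x : Fin n → ℝ}
    (h : ∀ i ∈ s, ContDiffAt ℝ (⊤ : ℕ∞) (f i) x) :
    ContDiffAt ℝ (⊤ : ℕ∞) (fun y => ∏ i ∈ s, f i y) x := by
  classical
  induction s using Finset.cons_induction with
  | empty => simpa using contDiffAt_const
  | cons a s has ih =>
    simp only [Finset.prod_cons]
    exact (h a (Finset.mem_cons_self a s)).mul
      (ih fun i hi => h i (Finset.mem_cons_of_mem hi))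

lemma contDiffAt_det {n : ℕ} {A : (Fin n → ℝ) → Matrix (Fin n) (Fin n) ℝ} {x : Fin n → ℝ}
    (h : ∀ i j, ContDiffAt ℝ (⊤ : ℕ∞) (fun y => A y i j) x) :
    ContDiffAt ℝ (⊤ : ℕ∞) (fun y => (A y).det) x := by
  simp only [Matrix.det_apply']
  exact ContDiffAt.sum fun σ _ =>
    (contDiffAt_const.mul (contDiffAt_finset_prod fun i _ => h (σ i) i))

lemma contDiffAt_adjugate {n : ℕ} {A : (Fin n → ℝ) → Matrix (Fin n) (Fin n) ℝ}
    {x : Fin n → ℝ} (h : ∀ i j, ContDiffAt ℝ (⊤ : ℕ∞) (fun y => A y i j) x) (i j : Fin n) :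
    ContDiffAt ℝ (⊤ : ℕ∞) (fun y => (A y).adjugate i j) x := by
  simp only [Matrix.adjugate_apply]
  exact contDiffAt_det fun i' k => by
    simp only [Matrix.updateRow_apply]
    by_cases hij : i' = j <;> simp [hij, h, contDiffAt_const]

lemma contDiffAt_inv_entry {n : ℕ} {A : (Fin n → ℝ) → Matrix (Fin n) (Fin n) ℝ}
    {x : Fin n → ℝ} (h : ∀ i j, ContDiffAt ℝ (⊤ : ℕ∞) (fun y => A y i j) x)
    (hdet : (A x).det ≠ 0) (i j : Fin n) :
    ContDiffAt ℝ (⊤ : ℕ∞) (fun y => (A y)⁻¹ i j) x := by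
  have : (fun y => (A y)⁻¹ i j) = fun y => ((A y).det)⁻¹ * (A y).adjugate i j := by
    funext y
    rw [Matrix.inv_def, Matrix.smul_apply, Ring.inverse_eq_inv', smul_eq_mul]
  rw [this]
  exact ((contDiffAt_det h).inv hdet).mul (contDiffAt_adjugate h i j)

lemma pd_congr_nhds {n : ℕ} {f g : (Fin n → ℝ) → ℝ} {x : Fin n → ℝ}
    (h : f =ᶠ[nhds x] g) (j : Fin n) : pd f j x = pd g j x := by
  unfold pd; rw [h.fderiv_eq]

lemma pd_sum {n : ℕ} {ι : Type*} {s : Finset ι} {f : ι → (Fin n → ℝ) → ℝ} {x : Fin n → ℝ}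
    (hf : ∀ i ∈ s, DifferentiableAt ℝ (f i) x) (j : Fin n) :
    pd (fun y => ∑ i ∈ s, f i y) j x = ∑ i ∈ s, pd (f i) j x := by
  unfold pd; rw [fderiv_fun_sum hf]; simp

lemma pd_const_mul {n : ℕ} {f : (Fin n → ℝ) → ℝ} {x : Fin n → ℝ}
    (hf : DifferentiableAt ℝ f x) (c : ℝ) (j : Fin n) :
    pd (fun y => c * f y) j x = c * pd f j x := by
  unfold pd; rw [fderiv_const_mul hf]; simp

lemma pd_neg {n : ℕ} {f : (Fin n → ℝ) → ℝ} {x : Fin n → ℝ} (j : Fin n) :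
    pd (fun y => -f y) j x = -pd f j x := by
  unfold pd; rw [fderiv_fun_neg]; simp

lemma pd_exp_comp {n : ℕ} {g : (Fin n → ℝ) → ℝ} {x : Fin n → ℝ}
    (hg : DifferentiableAt ℝ g x) (j : Fin n) :
    pd (fun y => Real.exp (g y)) j x = Real.exp (g x) * pd g j x := by
  unfold pd
  have h := ((Real.hasDerivAt_exp (g x)).comp_hasFDerivAt x hg.hasFDerivAt).fderiv
  rw [show (fun y => Real.exp (g y)) = Real.exp ∘ g from rfl, h]
  simp

/-- The torus-invariant function `w = exp(-⟨α, ∇φ⟩)` is an eigenfunction of the weighted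
toric Laplacian: `L w = -(⟨α, Gα⟩ + 2⟨α, a⟩) w`, where `G = Hess φ` and `H = G⁻¹`. -/
theorem stmt1 {n : ℕ} (U : Set (Fin n → ℝ)) (hUopen : IsOpen U)
    (φ : (Fin n → ℝ) → ℝ) (hφ : ContDiffOn ℝ (⊤ : ℕ∞) φ U)
    (G H : (Fin n → ℝ) → Matrix (Fin n) (Fin n) ℝ)
    (hG : ∀ x, G x = Matrix.of fun i j => pd (fun y => pd φ j y) i x)
    (hGinv : ∀ x ∈ U, IsUnit (G x))
    (hH : ∀ x, H x = (G x)⁻¹)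
    (a α : Fin n → ℝ)
    (w : (Fin n → ℝ) → ℝ)
    (hw : ∀ x, w x = Real.exp (-(∑ i, α i * pd φ i x))) :
    ∀ x ∈ U,
      -(∑ i, ∑ j, pd (fun y => H y i j * pd w j y) i x)
        + 2 * ∑ i, ∑ j, a i * H x i j * pd w j x
      = -((∑ i, ∑ j, α i * G x i j * α j) + 2 * ∑ i, α i * a i) * w x := by
  classical
  intro x hx
  have hUx : U ∈ nhds x := hUopen.mem_nhds hx
  have hφat : ∀ y ∈ U, ContDiffAt ℝ (⊤ : ℕ∞) φ y := fun y hy => hφ.contDiffAt (hUopen.mem_nhds hy)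
  set g : (Fin n → ℝ) → ℝ := fun y => -(∑ i, α i * pd φ i y) with hg_def
  have hw_eq : w = fun y => Real.exp (g y) := funext fun y => hw y
  have hpdφ : ∀ y ∈ U, ∀ k, ContDiffAt ℝ (⊤ : ℕ∞) (pd φ k) y := fun y hy k =>
    pd_contDiffAt (hφat y hy) k
  have hgat : ∀ y ∈ U, ContDiffAt ℝ (⊤ : ℕ∞) g y := fun y hy =>
    (ContDiffAt.sum fun k _ => contDiffAt_const.mul (hpdφ y hy k)).neg
  have hwat : ∀ y ∈ U, ContDiffAt ℝ (⊤ : ℕ∞) w y := by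
    intro y hy; rw [hw_eq]
    exact Real.contDiff_exp.contDiffAt.comp y (hgat y hy)
  have hGapp : ∀ y i j, G y i j = pd (pd φ j) i y := by
    intro y i j; rw [hG y]; rfl
  have hGent : ∀ i j, ∀ y ∈ U, ContDiffAt ℝ (⊤ : ℕ∞) (fun z => G z i j) y := by
    intro i j y hy
    have : (fun z => G z i j) = fun z => pd (pd φ j) i z := by
      funext z; rw [hGapp z i j]
    rw [this]
    exact pd_contDiffAt (hpdφ y hy j) i
  -- derivative formula for w on U
  have hpdw : ∀ y ∈ U, ∀ j, pd w j y = -(∑ k, α k * G y j k) * w y := by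
    intro y hy j
    rw [hw_eq]
    rw [pd_exp_comp ((hgat y hy).differentiableAt (by simp)) j]
    have hgpd : pd g j y = -(∑ k, α k * pd (pd φ k) j y) := by
      rw [hg_def]
      rw [pd_neg j, pd_sum (fun k _ =>
        (contDiffAt_const.mul (hpdφ y hy k)).differentiableAt (by simp)) j]
      congr 1
      exact Finset.sum_congr rfl fun k _ =>
        pd_const_mul ((hpdφ y hy k).differentiableAt (by simp)) (α k) j
    rw [hgpd]
    simp only [hGapp]
    ring
  have hdet : ∀ y ∈ U, (G y).det ≠ 0 := fun y hy => by
    have h1 := (Matrix.isUnit_iff_isUnit_det (G y)).mp (hGinv y hy)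
    exact h1.ne_zero
  have hHent : ∀ y ∈ U, ∀ i j, ContDiffAt ℝ (⊤ : ℕ∞) (fun z => H z i j) y := by
    intro y hy i j
    have : (fun z => H z i j) = fun z => (G z)⁻¹ i j := by funext z; rw [hH z]
    rw [this]
    exact contDiffAt_inv_entry (fun i j => hGent i j y hy) (hdet y hy) i j
  have hpdwat : ∀ y ∈ U, ∀ j, ContDiffAt ℝ (⊤ : ℕ∞) (pd w j) y := fun y hy j =>
    pd_contDiffAt (hwat y hy) j
  -- key identity
  have hkey : ∀ i, ∀ y ∈ U, (∑ j, H y i j * pd w j y) = -(α i) * w y := by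
    intro i y hy
    have hHG : ∀ k, (∑ j, H y i j * G y j k) = if i = k then (1:ℝ) else 0 := by
      intro k
      have h1 : H y * G y = 1 := by
        rw [hH y]
        exact Matrix.nonsing_inv_mul (G y)
          ((Matrix.isUnit_iff_isUnit_det (G y)).mp (hGinv y hy))
      calc (∑ j, H y i j * G y j k) = (H y * G y) i k := (Matrix.mul_apply).symm
        _ = (1 : Matrix (Fin n) (Fin n) ℝ) i k := by rw [h1]
        _ = if i = k then 1 else 0 := Matrix.one_apply
    calc (∑ j, H y i j * pd w j y)
        = ∑ j, H y i j * (-(∑ k, α k * G y j k) * w y) :=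
          Finset.sum_congr rfl fun j _ => by rw [hpdw y hy j]
      _ = -(∑ k, α k * (∑ j, H y i j * G y j k)) * w y := by
          simp only [Finset.mul_sum, Finset.sum_mul, neg_mul, mul_neg,
            Finset.sum_neg_distrib]
          rw [Finset.sum_comm]
          exact congrArg Neg.neg (Finset.sum_congr rfl fun k _ =>
            Finset.sum_congr rfl fun j _ => by ring)
      _ = -(∑ k, α k * (if i = k then (1:ℝ) else 0)) * w y := by
          simp only [hHG]
      _ = -(α i) * w y := by
          simp [mul_ite, mul_one, mul_zero, Finset.sum_ite_eq]
  -- first term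
  have hterm1 : ∀ i, (∑ j, pd (fun y => H y i j * pd w j y) i x)
      = α i * (∑ k, α k * G x i k) * w x := by
    intro i
    have hdiff : ∀ j ∈ Finset.univ, DifferentiableAt ℝ (fun y => H y i j * pd w j y) x :=
      fun j _ => ((hHent x hx i j).mul (hpdwat x hx j)).differentiableAt (by simp)
    rw [← pd_sum hdiff i]
    have hev : (fun y => ∑ j, H y i j * pd w j y) =ᶠ[nhds x] (fun y => -(α i) * w y) :=
      Filter.eventuallyEq_of_mem hUx fun y hy => hkey i y hy
    rw [pd_congr_nhds hev i,
      pd_const_mul ((hwat x hx).differentiableAt (by simp)) _ i, hpdw x hx i]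
    ring
  have hterm2 : ∀ i, (∑ j, a i * H x i j * pd w j x) = a i * (-(α i) * w x) := by
    intro i
    calc (∑ j, a i * H x i j * pd w j x)
        = a i * ∑ j, H x i j * pd w j x := by
          rw [Finset.mul_sum]
          exact Finset.sum_congr rfl fun j _ => by ring
      _ = a i * (-(α i) * w x) := by rw [hkey i x hx]
  rw [Finset.sum_congr rfl fun i _ => hterm1 i, Finset.sum_congr rfl fun i _ => hterm2 i]
  have e1 : (∑ i, α i * (∑ k, α k * G x i k) * w x)
      = (∑ i, ∑ j, α i * G x i j * α j) * w x := by
    simp only [Finset.mul_sum, Finset.sum_mul]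
    exact Finset.sum_congr rfl fun i _ => Finset.sum_congr rfl fun k _ => by ring
  have e2 : (∑ i, a i * (-(α i) * w x)) = -((∑ i, α i * a i) * w x) := by
    rw [Finset.sum_mul, ← Finset.sum_neg_distrib]
    exact Finset.sum_congr rfl fun i _ => by ring
  rw [e1, e2]
  ring
end

section
/- Let U ⊆ ℝⁿ be open, let φ : U → ℝ be smooth with Hessian matrix G(x) invertible at every x ∈ U, set H(x) := G(x)⁻¹, and let a, α ∈ ℝⁿ. Then the smooth complex-valued function u(x,t) = exp(−⟨α, ∇φ(x)⟩ + √−1 ⟨α,t⟩) on U × ℝⁿ satisfies 𝔏u = 0, where (𝔏u)(x,t) = −Σ_{i,j} ∂_{x_i}(H_{ij} ∂_{x_j} u) − Σ_{i,j} G_{ij}(x) ∂_{t_i}∂_{t_j} u + 2 Σ_{i,j} a_i H_{ij}(x) ∂_{x_j} u − 2√−1 Σ_j a_j ∂_{t_j} u. -/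
/-- Partial derivative in the `i`-th action (`x`) direction of a complex-valued function
on action-angle coordinates `(x, t)`. -/
noncomputable def pdx {n : ℕ} (f : (Fin n → ℝ) × (Fin n → ℝ) → ℂ) (i : Fin n)
    (p : (Fin n → ℝ) × (Fin n → ℝ)) : ℂ :=
  fderiv ℝ f p (Pi.single i 1, 0)

/-- Partial derivative in the `i`-th angle (`t`) direction of a complex-valued function
on action-angle coordinates `(x, t)`. -/
noncomputable def pdt {n : ℕ} (f : (Fin n → ℝ) × (Fin n → ℝ) → ℂ) (i : Fin n)
    (p : (Fin n → ℝ) × (Fin n → ℝ)) : ℂ :=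
  fderiv ℝ f p (0, Pi.single i 1)

/-- The complex weighted toric Laplacian `𝔏` in action-angle coordinates. -/
noncomputable def Lop {n : ℕ} (H G : (Fin n → ℝ) → Matrix (Fin n) (Fin n) ℝ)
    (a : Fin n → ℝ) (u : (Fin n → ℝ) × (Fin n → ℝ) → ℂ)
    (p : (Fin n → ℝ) × (Fin n → ℝ)) : ℂ :=
  -(∑ i, ∑ j, pdx (fun q => (H q.1 i j : ℂ) * pdx u j q) i p)
    - (∑ i, ∑ j, (G p.1 i j : ℂ) * pdt (fun q => pdt u j q) i p)
    + 2 * ∑ i, ∑ j, (a i : ℂ) * (H p.1 i j : ℂ) * pdx u j p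
    - 2 * Complex.I * ∑ j, (a j : ℂ) * pdt u j p

open Filter Topology

lemma diffAt_det {n : ℕ} {X : Type*} [NormedAddCommGroup X] [NormedSpace ℝ X]
    {M : X → Matrix (Fin n) (Fin n) ℝ} {x : X}
    (h : ∀ i j, DifferentiableAt ℝ (fun y => M y i j) x) :
    DifferentiableAt ℝ (fun y => (M y).det) x := by
  simp only [Matrix.det_apply']
  refine DifferentiableAt.fun_sum fun σ _ => DifferentiableAt.const_mul ?_ _
  exact (HasFDerivAt.finset_prod (u := Finset.univ) (g := fun i y => M y (σ i) i)
    (fun i _ => (h (σ i) i).hasFDerivAt)).differentiableAt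

lemma diffAt_adjugate {n : ℕ} {X : Type*} [NormedAddCommGroup X] [NormedSpace ℝ X]
    {M : X → Matrix (Fin n) (Fin n) ℝ} {x : X}
    (h : ∀ i j, DifferentiableAt ℝ (fun y => M y i j) x) (i j : Fin n) :
    DifferentiableAt ℝ (fun y => (M y).adjugate i j) x := by
  simp only [Matrix.adjugate_apply]
  apply diffAt_det
  intro k l
  rcases eq_or_ne k j with rfl | hk
  · simp only [Matrix.updateRow_self]
    exact differentiableAt_const _
  · simp only [Matrix.updateRow_ne hk]
    exact h k l

lemma diffAt_inv_entry {n : ℕ} {X : Type*} [NormedAddCommGroup X] [NormedSpace ℝ X]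
    {M : X → Matrix (Fin n) (Fin n) ℝ} {x : X}
    (h : ∀ i j, DifferentiableAt ℝ (fun y => M y i j) x)
    (hdet : (M x).det ≠ 0) (i j : Fin n) :
    DifferentiableAt ℝ (fun y => (M y)⁻¹ i j) x := by
  have he : ∀ y, (M y)⁻¹ i j = ((M y).det)⁻¹ * (M y).adjugate i j := by
    intro y
    rw [Matrix.inv_def, Matrix.smul_apply, Ring.inverse_eq_inv', smul_eq_mul]
  simp only [he]
  exact ((diffAt_det h).inv hdet).mul (diffAt_adjugate h i j)

lemma sum_factor {m : ℕ} (f : Fin m → ℝ) (c : ℂ) :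
    ∑ i, (f i : ℂ) * c = ((∑ i, f i : ℝ) : ℂ) * c := by
  push_cast
  exact (Finset.sum_mul _ _ _).symm


/-- The function `u(x,t) = exp(-⟨α, ∇φ(x)⟩ + √-1 ⟨α, t⟩)` is annihilated by the complex
weighted toric Laplacian, where `G = Hess φ` and `H = G⁻¹`. -/
theorem stmt2 {n : ℕ} (U : Set (Fin n → ℝ)) (hUopen : IsOpen U)
    (φ : (Fin n → ℝ) → ℝ) (hφ : ContDiffOn ℝ (⊤ : ℕ∞) φ U)
    (G H : (Fin n → ℝ) → Matrix (Fin n) (Fin n) ℝ)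
    (hG : ∀ x, G x = Matrix.of fun i j => pd (fun y => pd φ j y) i x)
    (hGinv : ∀ x ∈ U, IsUnit (G x))
    (hH : ∀ x, H x = (G x)⁻¹)
    (a α : Fin n → ℝ)
    (u : (Fin n → ℝ) × (Fin n → ℝ) → ℂ)
    (hu : ∀ p : (Fin n → ℝ) × (Fin n → ℝ),
      u p = Complex.exp (-((∑ i, α i * pd φ i p.1 : ℝ) : ℂ)
        + Complex.I * ((∑ i, α i * p.2 i : ℝ) : ℂ))) :
    ∀ p : (Fin n → ℝ) × (Fin n → ℝ), p.1 ∈ U → Lop H G a u p = 0 := by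
  classical
  intro p hp
  -- smoothness of first partials
  have hφ2 : ContDiffOn ℝ 2 (fderiv ℝ φ) U := hφ.fderiv_of_isOpen hUopen (by exact WithTop.coe_le_coe.mpr le_top)
  have hpdC : ∀ k, ContDiffOn ℝ 2 (pd φ k) U := by
    intro k
    unfold pd
    exact hφ2.clm_apply contDiffOn_const
  have hpdd : ∀ k, ∀ x ∈ U, DifferentiableAt ℝ (pd φ k) x := fun k x hx =>
    ((hpdC k).contDiffAt (hUopen.mem_nhds hx)).differentiableAt two_ne_zero
  have hpdfC : ∀ k, ContDiffOn ℝ 1 (fderiv ℝ (pd φ k)) U := fun k =>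
    (hpdC k).fderiv_of_isOpen hUopen (by norm_num)
  have hGent : ∀ i j x, G x i j = fderiv ℝ (pd φ j) x (Pi.single i 1) := by
    intro i j x
    rw [hG]
    rfl
  have hGd : ∀ i j, ∀ x ∈ U, DifferentiableAt ℝ (fun y => G y i j) x := by
    intro i j x hx
    simp only [hGent]
    exact (((hpdfC j).contDiffAt (hUopen.mem_nhds hx)).differentiableAt one_ne_zero).clm_apply
      (differentiableAt_const _)
  have hdetne : ∀ x ∈ U, (G x).det ≠ 0 := fun x hx =>
    (((Matrix.isUnit_iff_isUnit_det _).mp (hGinv x hx))).ne_zero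
  have hHd : ∀ i j, ∀ x ∈ U, DifferentiableAt ℝ (fun y => H y i j) x := by
    intro i j x hx
    simp only [hH]
    exact diffAt_inv_entry (fun i j => hGd i j x hx) (hdetne x hx) i j
  -- gv = G·α (as rows)
  set gv : (Fin n → ℝ) → Fin n → ℝ := fun x i => ∑ k, α k * G x i k with hgvdef
  have hgvd : ∀ i, ∀ x ∈ U, DifferentiableAt ℝ (fun y => gv y i) x := fun i x hx =>
    DifferentiableAt.fun_sum fun k _ => (hGd i k x hx).const_mul _
  -- ψ = ⟨α, ∇φ⟩
  set ψ : (Fin n → ℝ) → ℝ := fun x => ∑ k, α k * pd φ k x with hψdef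
  set Dψ : (Fin n → ℝ) → (Fin n → ℝ) →L[ℝ] ℝ := fun x => ∑ k, α k • fderiv ℝ (pd φ k) x
    with hDψdef
  have hψ : ∀ x ∈ U, HasFDerivAt ψ (Dψ x) x := fun x hx =>
    HasFDerivAt.fun_sum fun k _ => ((hpdd k x hx).hasFDerivAt).const_mul (α k)
  have hDψe : ∀ x i, Dψ x (Pi.single i 1) = gv x i := by
    intro x i
    simp only [hDψdef, ContinuousLinearMap.sum_apply, ContinuousLinearMap.smul_apply,
      smul_eq_mul, hgvdef, hGent]
  -- the linear functional ⟨α, ·⟩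
  set Lα : (Fin n → ℝ) →L[ℝ] ℝ := ∑ k, α k • ContinuousLinearMap.proj k with hLαdef
  have hLαe : ∀ w, Lα w = ∑ k, α k * w k := by
    intro w
    simp [hLαdef, ContinuousLinearMap.proj_apply]
  have hLαs : ∀ i, Lα (Pi.single i 1) = α i := by
    intro i
    rw [hLαe]
    simp [Pi.single_apply, Finset.sum_ite_eq']
  -- u as exp of a function
  have hufun : u = fun q : (Fin n → ℝ) × (Fin n → ℝ) =>
      Complex.exp (-((ψ q.1 : ℝ) : ℂ) + Complex.I * ((∑ k, α k * q.2 k : ℝ) : ℂ)) :=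
    funext fun q => hu q
  set fstL := ContinuousLinearMap.fst ℝ (Fin n → ℝ) (Fin n → ℝ) with hfstdef
  set sndL := ContinuousLinearMap.snd ℝ (Fin n → ℝ) (Fin n → ℝ) with hsnddef
  set Dc : ((Fin n → ℝ) × (Fin n → ℝ)) → ((Fin n → ℝ) × (Fin n → ℝ)) →L[ℝ] ℂ := fun q =>
    -(Complex.ofRealCLM.comp ((Dψ q.1).comp fstL))
      + Complex.I • Complex.ofRealCLM.comp (Lα.comp sndL) with hDcdef
  have hDu : ∀ q : (Fin n → ℝ) × (Fin n → ℝ), q.1 ∈ U → HasFDerivAt u (u q • Dc q) q := by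
    intro q hq
    rw [hufun]
    refine HasFDerivAt.cexp ?_
    have ha : HasFDerivAt (fun r : (Fin n → ℝ) × (Fin n → ℝ) => ((ψ r.1 : ℝ) : ℂ))
        (Complex.ofRealCLM.comp ((Dψ q.1).comp fstL)) q :=
      Complex.ofRealCLM.hasFDerivAt.comp q ((hψ q.1 hq).comp q hasFDerivAt_fst)
    have hb0 : HasFDerivAt (fun r : (Fin n → ℝ) × (Fin n → ℝ) => (∑ k, α k * r.2 k : ℝ))
        (Lα.comp sndL) q := by
      have h := (Lα.hasFDerivAt (x := q.2)).comp q (hasFDerivAt_snd (p := q))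
      exact h.congr_of_eventuallyEq (Filter.Eventually.of_forall fun r => (hLαe r.2).symm)
    have hb : HasFDerivAt (fun r : (Fin n → ℝ) × (Fin n → ℝ) => ((∑ k, α k * r.2 k : ℝ) : ℂ))
        (Complex.ofRealCLM.comp (Lα.comp sndL)) q :=
      Complex.ofRealCLM.hasFDerivAt.comp q hb0
    exact ha.neg.add (hb.const_mul Complex.I)
  have hDcx : ∀ q i, Dc q (Pi.single i 1, (0 : Fin n → ℝ)) = -((gv q.1 i : ℝ) : ℂ) := by
    intro q i
    simp [hDcdef, hfstdef, hsnddef, hDψe, hLαe]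
  have hDct : ∀ q i, Dc q ((0 : Fin n → ℝ), Pi.single i 1) = Complex.I * ((α i : ℝ) : ℂ) := by
    intro q i
    simp [hDcdef, hfstdef, hsnddef, hLαs, smul_eq_mul]
  have hpdx : ∀ j (q : (Fin n → ℝ) × (Fin n → ℝ)), q.1 ∈ U →
      pdx u j q = -((gv q.1 j : ℝ) : ℂ) * u q := by
    intro j q hq
    unfold pdx
    rw [(hDu q hq).fderiv, ContinuousLinearMap.smul_apply, hDcx, smul_eq_mul]
    ring
  have hpdt : ∀ j (q : (Fin n → ℝ) × (Fin n → ℝ)), q.1 ∈ U →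
      pdt u j q = Complex.I * ((α j : ℝ) : ℂ) * u q := by
    intro j q hq
    unfold pdt
    rw [(hDu q hq).fderiv, ContinuousLinearMap.smul_apply, hDct, smul_eq_mul]
    ring
  have hS : (U ×ˢ (Set.univ : Set (Fin n → ℝ))) ∈ 𝓝 p :=
    (hUopen.prod isOpen_univ).mem_nhds ⟨hp, trivial⟩
  -- second t-derivatives
  have hpdtt : ∀ i j, pdt (fun q => pdt u j q) i p = -(((α i : ℝ) : ℂ) * ((α j : ℝ) : ℂ)) * u p := by
    intro i j
    have heq : (fun q => pdt u j q) =ᶠ[𝓝 p] fun q => Complex.I * ((α j : ℝ) : ℂ) * u q :=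
      Filter.eventuallyEq_of_mem hS fun q hq => hpdt j q hq.1
    show fderiv ℝ (fun q => pdt u j q) p ((0 : Fin n → ℝ), Pi.single i 1) = _
    rw [heq.fderiv_eq, ((hDu p hp).const_mul (Complex.I * ((α j : ℝ) : ℂ))).fderiv]
    simp only [ContinuousLinearMap.smul_apply, hDct, smul_eq_mul]
    rw [show Complex.I * ((α j : ℝ) : ℂ) * (u p * (Complex.I * ((α i : ℝ) : ℂ)))
        = (Complex.I * Complex.I) * (((α i : ℝ) : ℂ) * ((α j : ℝ) : ℂ) * u p) by ring,
      Complex.I_mul_I]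
    ring
  -- inverse identity
  have hHG : ∀ x ∈ U, H x * G x = 1 := fun x hx => by
    rw [hH]
    exact Matrix.nonsing_inv_mul (G x) ((Matrix.isUnit_iff_isUnit_det _).mp (hGinv x hx))
  have hHgv : ∀ x ∈ U, ∀ i, ∑ j, H x i j * gv x j = α i := by
    intro x hx i
    simp only [hgvdef, Finset.mul_sum]
    rw [Finset.sum_comm]
    have : ∀ k, ∑ j, H x i j * (α k * G x j k) = α k * ((H x * G x) i k) := by
      intro k
      rw [Matrix.mul_apply, Finset.mul_sum]
      exact Finset.sum_congr rfl fun j _ => by ring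
    rw [Finset.sum_congr rfl fun k _ => this k]
    rw [hHG x hx]
    simp [Matrix.one_apply, Finset.sum_ite_eq']
  -- first term
  have hT1 : ∀ i, ∑ j, pdx (fun q => ((H q.1 i j : ℝ) : ℂ) * pdx u j q) i p
      = ((α i : ℝ) : ℂ) * ((gv p.1 i : ℝ) : ℂ) * u p := by
    intro i
    set m : Fin n → (Fin n → ℝ) → ℝ := fun j x => H x i j * gv x j with hmdef
    have hmd : ∀ j, DifferentiableAt ℝ (m j) p.1 := fun j =>
      (hHd i j p.1 hp).mul (hgvd j p.1 hp)
    set Dm : Fin n → (Fin n → ℝ) →L[ℝ] ℝ := fun j => fderiv ℝ (m j) p.1 with hDmdef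
    have hsum0 : ∑ j, Dm j (Pi.single i 1) = 0 := by
      have h1 : fderiv ℝ (fun x => ∑ j, m j x) p.1 = ∑ j, Dm j := fderiv_fun_sum fun j _ => hmd j
      have h2 : (fun x => ∑ j, m j x) =ᶠ[𝓝 p.1] fun _ => α i :=
        Filter.eventuallyEq_of_mem (hUopen.mem_nhds hp) fun x hx => hHgv x hx i
      have h3 : (∑ j, Dm j) = 0 := by
        rw [← h1, h2.fderiv_eq]
        simp
      rw [← ContinuousLinearMap.sum_apply, h3]
      simp
    have hfij : ∀ j, pdx (fun q => ((H q.1 i j : ℝ) : ℂ) * pdx u j q) i p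
        = -(((m j p.1 : ℝ) : ℂ) * (u p * (-((gv p.1 i : ℝ) : ℂ)))
            + u p * ((Dm j (Pi.single i 1) : ℝ) : ℂ)) := by
      intro j
      have heq : (fun q => ((H q.1 i j : ℝ) : ℂ) * pdx u j q) =ᶠ[𝓝 p]
          fun q => -(((m j q.1 : ℝ) : ℂ)) * u q := by
        refine Filter.eventuallyEq_of_mem hS fun q hq => ?_
        rw [hpdx j q hq.1]
        simp only [hmdef]
        push_cast
        ring
      have hA : HasFDerivAt (fun q : (Fin n → ℝ) × (Fin n → ℝ) => ((m j q.1 : ℝ) : ℂ))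
          (Complex.ofRealCLM.comp ((Dm j).comp fstL)) p :=
        Complex.ofRealCLM.hasFDerivAt.comp p (((hmd j).hasFDerivAt).comp p hasFDerivAt_fst)
      show fderiv ℝ (fun q => ((H q.1 i j : ℝ) : ℂ) * pdx u j q) p (Pi.single i 1, (0 : Fin n → ℝ)) = _
      rw [heq.fderiv_eq, (hA.fun_neg.fun_mul (hDu p hp)).fderiv]
      simp only [ContinuousLinearMap.add_apply, ContinuousLinearMap.smul_apply,
        ContinuousLinearMap.neg_apply, ContinuousLinearMap.comp_apply, hfstdef,
        ContinuousLinearMap.coe_fst', Complex.ofRealCLM_apply, hDcx, smul_eq_mul]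
      ring
    rw [Finset.sum_congr rfl fun j _ => hfij j]
    have step : ∑ j, -(((m j p.1 : ℝ) : ℂ) * (u p * (-((gv p.1 i : ℝ) : ℂ)))
        + u p * ((Dm j (Pi.single i 1) : ℝ) : ℂ))
        = ∑ j, (((m j p.1 : ℝ) : ℂ) * ((gv p.1 i : ℝ) * u p)
            + ((Dm j (Pi.single i 1) : ℝ) : ℂ) * (-(u p))) :=
      Finset.sum_congr rfl fun j _ => by ring
    rw [step, Finset.sum_add_distrib]
    have s1 : ∑ j, ((m j p.1 : ℝ) : ℂ) * (((gv p.1 i : ℝ) : ℂ) * u p)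
        = ((∑ j, m j p.1 : ℝ) : ℂ) * (((gv p.1 i : ℝ) : ℂ) * u p) := sum_factor _ _
    have s2 : ∑ j, ((Dm j (Pi.single i 1) : ℝ) : ℂ) * (-(u p))
        = ((∑ j, Dm j (Pi.single i 1) : ℝ) : ℂ) * (-(u p)) := sum_factor _ _
    rw [s1, s2, hsum0, hHgv p.1 hp i]
    push_cast
    ring
  -- assemble
  unfold Lop
  have hgvsum : ∀ i, ∑ k, α k * G p.1 i k = gv p.1 i := fun i => by rw [hgvdef]
  have eT1 : ∑ i, ∑ j, pdx (fun q => ((H q.1 i j : ℝ) : ℂ) * pdx u j q) i p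
      = ((∑ i, α i * gv p.1 i : ℝ) : ℂ) * u p := by
    rw [Finset.sum_congr rfl fun i _ => hT1 i]
    rw [Finset.sum_congr rfl fun i (_ : i ∈ Finset.univ) =>
      show ((α i : ℝ) : ℂ) * ((gv p.1 i : ℝ) : ℂ) * u p = ((α i * gv p.1 i : ℝ) : ℂ) * u p by
        push_cast; ring]
    exact sum_factor _ _
  have eT2 : ∑ i, ∑ j, ((G p.1 i j : ℝ) : ℂ) * pdt (fun q => pdt u j q) i p
      = ((∑ i, α i * gv p.1 i : ℝ) : ℂ) * (-(u p)) := by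
    rw [Finset.sum_congr rfl fun i _ => Finset.sum_congr rfl fun j (_ : j ∈ Finset.univ) => by
      rw [hpdtt i j]]
    have inner : ∀ i, ∑ j, ((G p.1 i j : ℝ) : ℂ) * (-(((α i : ℝ) : ℂ) * ((α j : ℝ) : ℂ)) * u p)
        = ((α i * gv p.1 i : ℝ) : ℂ) * (-(u p)) := by
      intro i
      rw [Finset.sum_congr rfl fun j (_ : j ∈ Finset.univ) =>
        show ((G p.1 i j : ℝ) : ℂ) * (-(((α i : ℝ) : ℂ) * ((α j : ℝ) : ℂ)) * u p)
          = ((α j * G p.1 i j : ℝ) : ℂ) * (((α i : ℝ) : ℂ) * (-(u p))) by push_cast; ring]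
      rw [sum_factor, hgvsum i]
      push_cast
      ring
    rw [Finset.sum_congr rfl fun i _ => inner i]
    rw [Finset.sum_congr rfl fun i (_ : i ∈ Finset.univ) =>
      show ((α i * gv p.1 i : ℝ) : ℂ) * (-(u p)) = ((α i * gv p.1 i : ℝ) : ℂ) * (-(u p)) from rfl]
    exact sum_factor _ _
  have eT3 : ∑ i, ∑ j, ((a i : ℝ) : ℂ) * ((H p.1 i j : ℝ) : ℂ) * pdx u j p
      = ((∑ i, a i * α i : ℝ) : ℂ) * (-(u p)) := by
    rw [Finset.sum_congr rfl fun i _ => Finset.sum_congr rfl fun j (_ : j ∈ Finset.univ) => by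
      rw [hpdx j p hp]]
    have inner : ∀ i, ∑ j, ((a i : ℝ) : ℂ) * ((H p.1 i j : ℝ) : ℂ) * (-((gv p.1 j : ℝ) : ℂ) * u p)
        = ((a i * α i : ℝ) : ℂ) * (-(u p)) := by
      intro i
      rw [Finset.sum_congr rfl fun j (_ : j ∈ Finset.univ) =>
        show ((a i : ℝ) : ℂ) * ((H p.1 i j : ℝ) : ℂ) * (-((gv p.1 j : ℝ) : ℂ) * u p)
          = ((H p.1 i j * gv p.1 j : ℝ) : ℂ) * (((a i : ℝ) : ℂ) * (-(u p))) by push_cast; ring]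
      rw [sum_factor, hHgv p.1 hp i]
      push_cast
      ring
    rw [Finset.sum_congr rfl fun i _ => inner i]
    exact sum_factor _ _
  have eT4 : ∑ j, ((a j : ℝ) : ℂ) * pdt u j p
      = ((∑ i, a i * α i : ℝ) : ℂ) * (Complex.I * u p) := by
    rw [Finset.sum_congr rfl fun j (_ : j ∈ Finset.univ) => by rw [hpdt j p hp]]
    rw [Finset.sum_congr rfl fun j (_ : j ∈ Finset.univ) =>
      show ((a j : ℝ) : ℂ) * (Complex.I * ((α j : ℝ) : ℂ) * u p)
        = ((a j * α j : ℝ) : ℂ) * (Complex.I * u p) by push_cast; ring]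
    exact sum_factor _ _
  rw [eT1, eT2, eT3, eT4]
  rw [show -(((∑ i, α i * gv p.1 i : ℝ) : ℂ) * u p)
        - ((∑ i, α i * gv p.1 i : ℝ) : ℂ) * (-(u p))
        + 2 * (((∑ i, a i * α i : ℝ) : ℂ) * (-(u p)))
        - 2 * Complex.I * (((∑ i, a i * α i : ℝ) : ℂ) * (Complex.I * u p))
      = -(2 : ℂ) * (1 + Complex.I * Complex.I) * (((∑ i, a i * α i : ℝ) : ℂ) * u p) by ring,
    Complex.I_mul_I]
  ring
end

section
/- Let U ⊆ ℝⁿ be open, let φ : U → ℝ be smooth with Hessian matrix G(x) invertible at every x ∈ U, set H(x) := G(x)⁻¹, and let a, α, b ∈ ℝⁿ with ⟨α,b⟩ = 1. Assume the soliton condition: for every x ∈ U, −Σ_{i,j} ∂_{x_i}(H_{ij}(x) b_j) + 2 Σ_{i,j} a_i H_{ij}(x) b_j = 2⟨x,b⟩. Then the smooth complex-valued function v(x,t) = (⟨x,b⟩ + 1) · exp(−⟨α, ∇φ(x)⟩ + √−1 ⟨α,t⟩) on U × ℝⁿ satisfies 𝔏v = 2v, where (𝔏v)(x,t) = −Σ_{i,j}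 ∂_{x_i}(H_{ij} ∂_{x_j} v) − Σ_{i,j} G_{ij}(x) ∂_{t_i}∂_{t_j} v + 2 Σ_{i,j} a_i H_{ij}(x) ∂_{x_j} v − 2√−1 Σ_j a_j ∂_{t_j} v. -/
open scoped Topology

section Aux

lemma one_le_inftyW : (1 : WithTop ℕ∞) ≤ ((⊤ : ℕ∞) : WithTop ℕ∞) := by
  have h : (1 : WithTop ℕ∞) = ((1 : ℕ∞) : WithTop ℕ∞) := rfl
  rw [h]; exact WithTop.coe_le_coe.mpr le_top

lemma two_le_inftyW : (2 : WithTop ℕ∞) ≤ ((⊤ : ℕ∞) : WithTop ℕ∞) := by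
  have h : (2 : WithTop ℕ∞) = ((2 : ℕ∞) : WithTop ℕ∞) := rfl
  rw [h]; exact WithTop.coe_le_coe.mpr le_top

lemma cdAt_prod {E : Type*} [NormedAddCommGroup E] [NormedSpace ℝ E] {ι : Type*}
    [DecidableEq ι] (s : Finset ι) (f : ι → E → ℝ) {x : E}
    (h : ∀ i ∈ s, ContDiffAt ℝ (⊤:ℕ∞) (f i) x) :
    ContDiffAt ℝ (⊤:ℕ∞) (fun y => ∏ i ∈ s, f i y) x := by
  classical
  induction s using Finset.induction_on with
  | empty => simpa using contDiffAt_const (c := (1:ℝ))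
  | insert c s hni ih =>
    simp only [Finset.prod_insert hni]
    exact (h c (Finset.mem_insert_self c s)).mul
      (ih fun i hi => h i (Finset.mem_insert_of_mem hi))

lemma cdAt_det {E : Type*} [NormedAddCommGroup E] [NormedSpace ℝ E] {m : ℕ}
    (M : E → Matrix (Fin m) (Fin m) ℝ) {x : E}
    (h : ∀ i j, ContDiffAt ℝ (⊤:ℕ∞) (fun y => M y i j) x) :
    ContDiffAt ℝ (⊤:ℕ∞) (fun y => (M y).det) x := by
  classical
  simp only [Matrix.det_apply']
  exact ContDiffAt.sum fun σ _ =>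
    contDiffAt_const.mul (cdAt_prod Finset.univ (fun i y => M y (σ i) i) (fun i _ => h (σ i) i))

lemma cdAt_pd {n : ℕ} {f : (Fin n → ℝ) → ℝ} {x : Fin n → ℝ}
    (h : ContDiffAt ℝ (⊤:ℕ∞) f x) (j : Fin n) :
    ContDiffAt ℝ (⊤:ℕ∞) (pd f j) x := by
  have h0 : ContDiffAt ℝ ((⊤:ℕ∞)+1) f x := h.of_le (le_of_eq (by simp))
  have h1 : ContDiffAt ℝ (⊤:ℕ∞) (fderiv ℝ f) x := h0.fderiv_right (le_refl _)
  exact h1.clm_apply contDiffAt_const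

lemma pd_pd_eq {n : ℕ} {φ : (Fin n → ℝ) → ℝ} {x : Fin n → ℝ}
    (h : ContDiffAt ℝ (⊤:ℕ∞) φ x) (i j : Fin n) :
    pd (pd φ j) i x = fderiv ℝ (fderiv ℝ φ) x (Pi.single i 1) (Pi.single j 1) := by
  have h0 : ContDiffAt ℝ ((⊤:ℕ∞)+1) φ x := h.of_le (le_of_eq (by simp))
  have hF : DifferentiableAt ℝ (fderiv ℝ φ) x :=
    (h0.fderiv_right (le_refl _) : ContDiffAt ℝ (⊤:ℕ∞) (fderiv ℝ φ) x).differentiableAt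
      (by simp)
  have h2 : HasFDerivAt (pd φ j)
      ((ContinuousLinearMap.apply ℝ ℝ (Pi.single j 1)).comp (fderiv ℝ (fderiv ℝ φ) x)) x :=
    ((ContinuousLinearMap.apply ℝ ℝ (Pi.single j 1)).hasFDerivAt.comp x hF.hasFDerivAt :)
  rw [pd, h2.fderiv]
  rfl

lemma pd_symm {n : ℕ} {φ : (Fin n → ℝ) → ℝ} {x : Fin n → ℝ}
    (h : ContDiffAt ℝ (⊤:ℕ∞) φ x) (i j : Fin n) :
    pd (pd φ j) i x = pd (pd φ i) j x := by
  rw [pd_pd_eq h i j, pd_pd_eq h j i]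
  exact (h.isSymmSndFDerivAt (by rw [minSmoothness_of_isRCLikeNormedField]; exact two_le_inftyW)) _ _

lemma hasFDerivAt_lin {n : ℕ} (b : Fin n → ℝ) (y : Fin n → ℝ) :
    HasFDerivAt (fun y : Fin n → ℝ => (∑ i, y i * b i) + 1)
      (∑ i, b i • (ContinuousLinearMap.proj i : (Fin n → ℝ) →L[ℝ] ℝ)) y := by
  have h : HasFDerivAt (fun y : Fin n → ℝ => ∑ i, y i * b i)
      (∑ i, b i • (ContinuousLinearMap.proj i : (Fin n → ℝ) →L[ℝ] ℝ)) y :=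
    HasFDerivAt.fun_sum fun i _ =>
      ((ContinuousLinearMap.proj i : (Fin n → ℝ) →L[ℝ] ℝ).hasFDerivAt.mul_const (b i))
  exact h.add_const 1

lemma lin_eval {n : ℕ} (b : Fin n → ℝ) (j : Fin n) :
    (∑ i, b i • (ContinuousLinearMap.proj i : (Fin n → ℝ) →L[ℝ] ℝ)) (Pi.single j 1) = b j := by
  simp [ContinuousLinearMap.sum_apply, Pi.single_apply, mul_ite, Finset.sum_ite_eq']

lemma pdx_aux {n : ℕ} (α : Fin n → ℝ) (g : Fin n → (Fin n → ℝ) → ℝ)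
    (u : (Fin n → ℝ) → ℝ) (Du : (Fin n → ℝ) →L[ℝ] ℝ)
    (q : (Fin n → ℝ) × (Fin n → ℝ))
    (hgd : ∀ k, DifferentiableAt ℝ (g k) q.1)
    (hu : HasFDerivAt u Du q.1) :
    (DifferentiableAt ℝ (fun q : (Fin n → ℝ) × (Fin n → ℝ) =>
        Complex.exp (-((∑ k, α k * g k q.1 : ℝ) : ℂ)
          + Complex.I * ((∑ i, α i * q.2 i : ℝ) : ℂ))) q)
    ∧ (DifferentiableAt ℝ (fun q : (Fin n → ℝ) × (Fin n → ℝ) =>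
        ((u q.1 : ℝ) : ℂ) * Complex.exp (-((∑ k, α k * g k q.1 : ℝ) : ℂ)
          + Complex.I * ((∑ i, α i * q.2 i : ℝ) : ℂ))) q)
    ∧ (∀ j, pdx (fun q => ((u q.1 : ℝ) : ℂ) * Complex.exp (-((∑ k, α k * g k q.1 : ℝ) : ℂ)
          + Complex.I * ((∑ i, α i * q.2 i : ℝ) : ℂ))) j q
        = (((Du (Pi.single j 1)) : ℝ) : ℂ) * Complex.exp (-((∑ k, α k * g k q.1 : ℝ) : ℂ)
            + Complex.I * ((∑ i, α i * q.2 i : ℝ) : ℂ))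
          - ((u q.1 : ℝ) : ℂ) * Complex.exp (-((∑ k, α k * g k q.1 : ℝ) : ℂ)
            + Complex.I * ((∑ i, α i * q.2 i : ℝ) : ℂ))
            * ((∑ k, α k * fderiv ℝ (g k) q.1 (Pi.single j 1) : ℝ) : ℂ))
    ∧ (∀ j, pdt (fun q => ((u q.1 : ℝ) : ℂ) * Complex.exp (-((∑ k, α k * g k q.1 : ℝ) : ℂ)
          + Complex.I * ((∑ i, α i * q.2 i : ℝ) : ℂ))) j q
        = Complex.I * ((α j : ℝ) : ℂ) * (((u q.1 : ℝ) : ℂ)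
            * Complex.exp (-((∑ k, α k * g k q.1 : ℝ) : ℂ)
              + Complex.I * ((∑ i, α i * q.2 i : ℝ) : ℂ)))) := by
  have hS1 : HasFDerivAt (fun y => ∑ k, α k * g k y) (∑ k, α k • fderiv ℝ (g k) q.1) q.1 :=
    HasFDerivAt.fun_sum fun k _ => ((hgd k).hasFDerivAt.const_mul (α k))
  have hS1p : HasFDerivAt (fun q : (Fin n → ℝ) × (Fin n → ℝ) => ∑ k, α k * g k q.1)
      ((∑ k, α k • fderiv ℝ (g k) q.1).comp
        (ContinuousLinearMap.fst ℝ (Fin n → ℝ) (Fin n → ℝ))) q :=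
    hS1.comp q hasFDerivAt_fst
  have hS2p : HasFDerivAt (fun q : (Fin n → ℝ) × (Fin n → ℝ) => ∑ i, α i * q.2 i)
      (∑ i, α i • ((ContinuousLinearMap.proj i).comp
        (ContinuousLinearMap.snd ℝ (Fin n → ℝ) (Fin n → ℝ)))) q :=
    HasFDerivAt.fun_sum fun i _ =>
      (((ContinuousLinearMap.proj i).comp
        (ContinuousLinearMap.snd ℝ (Fin n → ℝ) (Fin n → ℝ))).hasFDerivAt.const_mul (α i))
  have hC1 : HasFDerivAt (fun q : (Fin n → ℝ) × (Fin n → ℝ) => ((∑ k, α k * g k q.1 : ℝ) : ℂ))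
      (Complex.ofRealCLM.comp ((∑ k, α k • fderiv ℝ (g k) q.1).comp
        (ContinuousLinearMap.fst ℝ (Fin n → ℝ) (Fin n → ℝ)))) q :=
    (Complex.ofRealCLM.hasFDerivAt.comp q hS1p :)
  have hC2 : HasFDerivAt (fun q : (Fin n → ℝ) × (Fin n → ℝ) => ((∑ i, α i * q.2 i : ℝ) : ℂ))
      (Complex.ofRealCLM.comp (∑ i, α i • ((ContinuousLinearMap.proj i).comp
        (ContinuousLinearMap.snd ℝ (Fin n → ℝ) (Fin n → ℝ))))) q :=
    (Complex.ofRealCLM.hasFDerivAt.comp q hS2p :)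
  have hPh : HasFDerivAt (fun q : (Fin n → ℝ) × (Fin n → ℝ) =>
      -((∑ k, α k * g k q.1 : ℝ) : ℂ) + Complex.I * ((∑ i, α i * q.2 i : ℝ) : ℂ))
      (-(Complex.ofRealCLM.comp ((∑ k, α k • fderiv ℝ (g k) q.1).comp
        (ContinuousLinearMap.fst ℝ (Fin n → ℝ) (Fin n → ℝ))))
        + Complex.I • (Complex.ofRealCLM.comp (∑ i, α i • ((ContinuousLinearMap.proj i).comp
          (ContinuousLinearMap.snd ℝ (Fin n → ℝ) (Fin n → ℝ)))))) q :=
    hC1.neg.add (hC2.const_mul Complex.I)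
  have hE := hPh.cexp
  have hu' : HasFDerivAt (fun q : (Fin n → ℝ) × (Fin n → ℝ) => ((u q.1 : ℝ) : ℂ))
      (Complex.ofRealCLM.comp (Du.comp (ContinuousLinearMap.fst ℝ (Fin n → ℝ) (Fin n → ℝ)))) q :=
    (Complex.ofRealCLM.hasFDerivAt.comp q (hu.comp q hasFDerivAt_fst) :)
  have hmul := hu'.fun_mul hE
  refine ⟨hE.differentiableAt, hmul.differentiableAt, fun j => ?_, fun j => ?_⟩
  · rw [pdx, hmul.fderiv]
    simp only [ContinuousLinearMap.add_apply, ContinuousLinearMap.smul_apply,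
      ContinuousLinearMap.coe_comp', Function.comp_apply, ContinuousLinearMap.coe_fst',
      ContinuousLinearMap.coe_snd', ContinuousLinearMap.neg_apply,
      ContinuousLinearMap.sum_apply, ContinuousLinearMap.proj_apply,
      Complex.ofRealCLM_apply, smul_eq_mul, Complex.real_smul]
    simp only [Pi.zero_apply, mul_zero, Finset.sum_const_zero, Complex.ofReal_zero]
    ring
  · rw [pdt, hmul.fderiv]
    simp only [ContinuousLinearMap.add_apply, ContinuousLinearMap.smul_apply,
      ContinuousLinearMap.coe_comp', Function.comp_apply, ContinuousLinearMap.coe_fst',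
      ContinuousLinearMap.coe_snd', ContinuousLinearMap.neg_apply,
      ContinuousLinearMap.sum_apply, ContinuousLinearMap.proj_apply,
      Complex.ofRealCLM_apply, smul_eq_mul, Complex.real_smul, map_zero,
      Pi.zero_apply, mul_zero, Finset.sum_const_zero, Complex.ofReal_zero]
    simp only [Pi.single_apply, mul_ite, mul_one, mul_zero, Finset.sum_ite_eq', Finset.mem_univ,
      if_true]
    ring

lemma diffat_ofreal_fst {n : ℕ} {u : (Fin n → ℝ) → ℝ} {q : (Fin n → ℝ) × (Fin n → ℝ)}
    (hu : DifferentiableAt ℝ u q.1) :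
    DifferentiableAt ℝ (fun q : (Fin n → ℝ) × (Fin n → ℝ) => ((u q.1 : ℝ) : ℂ)) q :=
  Complex.ofRealCLM.differentiableAt.comp q (hu.comp q differentiableAt_fst)

lemma sum_ofReal_mul {n : ℕ} (r : Fin n → ℝ) (e : ℂ) :
    ((∑ i, r i : ℝ) : ℂ) * e = ∑ i, (r i : ℂ) * e := by
  push_cast
  rw [Finset.sum_mul]

end Aux
/-- Theorem 5.3 (analytic core): if `(g, a)` is a soliton (coordinate form of
`Δ^{g,a}⟨μ,b⟩ = 2⟨μ,b⟩`) and `α` is a Demazure root with distinguished normal `b`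
(`⟨α,b⟩ = 1`), then the root function
`v(x,t) = (⟨x,b⟩ + 1)·exp(-⟨α,∇φ(x)⟩ + √-1⟨α,t⟩)` satisfies `𝔏 v = 2 v`. -/
theorem stmt3 {n : ℕ} (U : Set (Fin n → ℝ)) (hUopen : IsOpen U)
    (φ : (Fin n → ℝ) → ℝ) (hφ : ContDiffOn ℝ (⊤ : ℕ∞) φ U)
    (G H : (Fin n → ℝ) → Matrix (Fin n) (Fin n) ℝ)
    (hG : ∀ x, G x = Matrix.of fun i j => pd (fun y => pd φ j y) i x)
    (hGinv : ∀ x ∈ U, IsUnit (G x))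
    (hH : ∀ x, H x = (G x)⁻¹)
    (a α b : Fin n → ℝ)
    (hαb : ∑ i, α i * b i = 1)
    (hsoliton : ∀ x ∈ U,
      -(∑ i, ∑ j, pd (fun y => H y i j * b j) i x) + 2 * ∑ i, ∑ j, a i * H x i j * b j
        = 2 * ∑ i, x i * b i)
    (v : (Fin n → ℝ) × (Fin n → ℝ) → ℂ)
    (hv : ∀ p : (Fin n → ℝ) × (Fin n → ℝ),
      v p = (((∑ i, p.1 i * b i) + 1 : ℝ) : ℂ)
        * Complex.exp (-((∑ i, α i * pd φ i p.1 : ℝ) : ℂ)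
            + Complex.I * ((∑ i, α i * p.2 i : ℝ) : ℂ))) :
    ∀ p : (Fin n → ℝ) × (Fin n → ℝ), p.1 ∈ U → Lop H G a v p = 2 * v p := by
  classical
  have hveq : v = fun q : (Fin n → ℝ) × (Fin n → ℝ) => (((∑ i, q.1 i * b i) + 1 : ℝ) : ℂ)
      * Complex.exp (-((∑ i, α i * pd φ i q.1 : ℝ) : ℂ)
          + Complex.I * ((∑ i, α i * q.2 i : ℝ) : ℂ)) := funext hv
  subst hveq
  intro p hp
  -- basic smoothness facts
  have hφat : ∀ y ∈ U, ContDiffAt ℝ (⊤:ℕ∞) φ y := fun y hy =>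
    ((hφ y hy).contDiffAt (hUopen.mem_nhds hy)).of_le (by simp)
  have hgsm : ∀ (j : Fin n), ∀ y ∈ U, ContDiffAt ℝ (⊤:ℕ∞) (pd φ j) y := fun j y hy =>
    cdAt_pd (hφat y hy) j
  have hgd : ∀ (y : Fin n → ℝ), y ∈ U → ∀ k, DifferentiableAt ℝ (pd φ k) y := fun y hy k =>
    (hgsm k y hy).differentiableAt (by simp)
  have hGa : ∀ (y : Fin n → ℝ) (j k : Fin n),
      fderiv ℝ (pd φ k) y (Pi.single j 1) = G y j k := by
    intro y j k; rw [hG]; rfl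
  have hGeq : ∀ (y : Fin n → ℝ) (i j : Fin n), G y i j = pd (pd φ j) i y := by
    intro y i j; rw [hG]; rfl
  have hGsm : ∀ (i j : Fin n), ∀ y ∈ U, ContDiffAt ℝ (⊤:ℕ∞) (fun z => G z i j) y := by
    intro i j y hy
    have h1 : (fun z => G z i j) = pd (pd φ j) i := funext fun z => hGeq z i j
    rw [h1]
    exact cdAt_pd (hgsm j y hy) i
  have hGsymm : ∀ y ∈ U, ∀ i j, G y i j = G y j i := by
    intro y hy i j
    rw [hGeq, hGeq]
    exact pd_symm (hφat y hy) i j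
  have hdet : ∀ y ∈ U, (G y).det ≠ 0 := fun y hy =>
    (((Matrix.isUnit_iff_isUnit_det (G y)).mp (hGinv y hy)).ne_zero)
  have hHsm : ∀ (i j : Fin n), ∀ y ∈ U, ContDiffAt ℝ (⊤:ℕ∞) (fun z => H z i j) y := by
    intro i j y hy
    have hfun : (fun z => H z i j)
        = fun z => ((G z).det)⁻¹ * ((G z).updateRow j (Pi.single i 1)).det := by
      funext z
      rw [hH, Matrix.inv_def, Ring.inverse_eq_inv', Matrix.smul_apply, Matrix.adjugate_apply,
        smul_eq_mul]
    rw [hfun]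
    refine ContDiffAt.mul (ContDiffAt.inv (cdAt_det G (fun i' j' => hGsm i' j' y hy))
      (hdet y hy)) (cdAt_det _ (fun i' j' => ?_))
    by_cases hij : i' = j
    · simp only [Matrix.updateRow_apply, hij, if_true]
      exact contDiffAt_const
    · simp only [Matrix.updateRow_apply, hij, if_false]
      exact hGsm i' j' y hy
  have hHd : ∀ (i j : Fin n), ∀ y ∈ U, DifferentiableAt ℝ (fun z => H z i j) y :=
    fun i j y hy => (hHsm i j y hy).differentiableAt (by simp)
  have hHG : ∀ y ∈ U, H y * G y = 1 := fun y hy => by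
    rw [hH]; exact Matrix.nonsing_inv_mul _ ((Matrix.isUnit_iff_isUnit_det (G y)).mp (hGinv y hy))
  have hGH : ∀ y ∈ U, G y * H y = 1 := fun y hy => by
    rw [hH]; exact Matrix.mul_nonsing_inv _ ((Matrix.isUnit_iff_isUnit_det (G y)).mp (hGinv y hy))
  -- algebraic identities
  have idA : ∀ y ∈ U, ∀ i, ∑ j, H y i j * (∑ k, α k * G y j k) = α i := by
    intro y hy i
    have h1 : ∀ j, H y i j * (∑ k, α k * G y j k) = ∑ k, α k * (H y i j * G y j k) := by
      intro j; rw [Finset.mul_sum]; exact Finset.sum_congr rfl fun k _ => by ring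
    rw [Finset.sum_congr rfl fun j _ => h1 j, Finset.sum_comm]
    have h2 : ∀ k, ∑ j, α k * (H y i j * G y j k) = α k * (H y * G y) i k := by
      intro k; rw [Matrix.mul_apply, Finset.mul_sum]
    rw [Finset.sum_congr rfl fun k _ => h2 k, hHG y hy]
    simp [Matrix.one_apply, Finset.sum_ite_eq']
  have idB : ∀ y ∈ U, ∑ i, (∑ j, H y i j * b j) * (∑ k, α k * G y i k) = 1 := by
    intro y hy
    have h1 : ∀ i, (∑ j, H y i j * b j) * (∑ k, α k * G y i k)
        = ∑ j, ∑ k, b j * α k * (G y k i * H y i j) := by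
      intro i
      rw [Finset.sum_mul]
      refine Finset.sum_congr rfl fun j _ => ?_
      rw [Finset.mul_sum]
      refine Finset.sum_congr rfl fun k _ => ?_
      rw [hGsymm y hy i k]; ring
    rw [Finset.sum_congr rfl fun i _ => h1 i, Finset.sum_comm]
    have h2 : ∀ j, ∑ i, ∑ k, b j * α k * (G y k i * H y i j)
        = ∑ k, b j * α k * (G y * H y) k j := by
      intro j
      rw [Finset.sum_comm]
      refine Finset.sum_congr rfl fun k _ => ?_
      rw [Matrix.mul_apply, Finset.mul_sum]
    rw [Finset.sum_congr rfl fun j _ => h2 j, hGH y hy]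
    simp only [Matrix.one_apply]
    rw [Finset.sum_comm]
    have h3 : ∀ k, ∑ j, b j * α k * (if k = j then (1:ℝ) else 0) = α k * b k := by
      intro k
      rw [Finset.sum_eq_single k]
      · simp [mul_comm]
      · intro j _ hjk; simp [Ne.symm hjk]
      · intro h; exact absurd (Finset.mem_univ k) h
    rw [Finset.sum_congr rfl fun k _ => h3 k, hαb]
  
  -- neighborhood filter
  have hnhds : ∀ q : (Fin n → ℝ) × (Fin n → ℝ), q.1 ∈ U →
      (U ×ˢ (Set.univ : Set (Fin n → ℝ))) ∈ 𝓝 q := fun q hq =>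
    (hUopen.prod isOpen_univ).mem_nhds (Set.mk_mem_prod hq (Set.mem_univ _))
  -- master derivative package for v
  have hmaster := fun (q : (Fin n → ℝ) × (Fin n → ℝ)) (hq : q.1 ∈ U) =>
    pdx_aux α (fun k => pd φ k) (fun y => (∑ i, y i * b i) + 1)
      (∑ i, b i • (ContinuousLinearMap.proj i : (Fin n → ℝ) →L[ℝ] ℝ)) q
      (hgd q.1 hq) (hasFDerivAt_lin b q.1)
  have hEdiff : ∀ q : (Fin n → ℝ) × (Fin n → ℝ), q.1 ∈ U →
      DifferentiableAt ℝ (fun q : (Fin n → ℝ) × (Fin n → ℝ) => Complex.exp (-((∑ k, α k * pd φ k q.1 : ℝ) : ℂ) + Complex.I * ((∑ i, α i * q.2 i : ℝ) : ℂ))) q :=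
    fun q hq => (hmaster q hq).1
  have hVdiff : ∀ q : (Fin n → ℝ) × (Fin n → ℝ), q.1 ∈ U →
      DifferentiableAt ℝ (fun q : (Fin n → ℝ) × (Fin n → ℝ) => (((∑ i, q.1 i * b i) + 1 : ℝ) : ℂ) * Complex.exp (-((∑ k, α k * pd φ k q.1 : ℝ) : ℂ) + Complex.I * ((∑ i, α i * q.2 i : ℝ) : ℂ))) q := fun q hq => (hmaster q hq).2.1
  have hpdxV : ∀ q : (Fin n → ℝ) × (Fin n → ℝ), q.1 ∈ U → ∀ j,
      pdx (fun q : (Fin n → ℝ) × (Fin n → ℝ) => (((∑ i, q.1 i * b i) + 1 : ℝ) : ℂ) * Complex.exp (-((∑ k, α k * pd φ k q.1 : ℝ) : ℂ) + Complex.I * ((∑ i, α i * q.2 i : ℝ) : ℂ))) j q = ((b j : ℝ) : ℂ) * Complex.exp (-((∑ k, α k * pd φ k q.1 : ℝ) : ℂ) + Complex.I * ((∑ i, α i * q.2 i : ℝ) : ℂ)) - ((((∑ i, q.1 i * b i) + 1 : ℝ)) : ℂ) * Complex.exp (-((∑ k, α k * pd φ k q.1 : ℝ) : ℂ) + Complex.I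 * ((∑ i, α i * q.2 i : ℝ) : ℂ)) * ((∑ k, α k * G q.1 j k : ℝ) : ℂ) := by
    intro q hq j
    have h := (hmaster q hq).2.2.1 j
    rw [lin_eval] at h
    simp only [hGa] at h
    exact h
  have hpdtV : ∀ q : (Fin n → ℝ) × (Fin n → ℝ), q.1 ∈ U → ∀ j,
      pdt (fun q : (Fin n → ℝ) × (Fin n → ℝ) => (((∑ i, q.1 i * b i) + 1 : ℝ) : ℂ) * Complex.exp (-((∑ k, α k * pd φ k q.1 : ℝ) : ℂ) + Complex.I * ((∑ i, α i * q.2 i : ℝ) : ℂ))) j q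
        = Complex.I * ((α j : ℝ) : ℂ) * ((((∑ i, q.1 i * b i) + 1 : ℝ) : ℂ) * Complex.exp (-((∑ k, α k * pd φ k q.1 : ℝ) : ℂ) + Complex.I * ((∑ i, α i * q.2 i : ℝ) : ℂ))) := by
    intro q hq j
    exact (hmaster q hq).2.2.2 j
  
  -- differentiability of building blocks at p
  have hlind : DifferentiableAt ℝ (fun y : Fin n → ℝ => (∑ i, y i * b i) + 1) p.1 :=
    (hasFDerivAt_lin b p.1).differentiableAt
  have hWd : ∀ j, DifferentiableAt ℝ
      (fun q : (Fin n → ℝ) × (Fin n → ℝ) => ((b j : ℝ) : ℂ) * Complex.exp (-((∑ k, α k * pd φ k q.1 : ℝ) : ℂ) + Complex.I * ((∑ i, α i * q.2 i : ℝ) : ℂ)) - ((((∑ i, q.1 i * b i) + 1 : ℝ)) : ℂ) * Complex.exp (-((∑ k, α k * pd φ k q.1 : ℝ) : ℂ) + Complex.I * ((∑ i, α i * q.2 i : ℝ) : ℂ)) * ((∑ k, α k * G q.1 j k : ℝ) : ℂ)) p := by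
    intro j
    refine DifferentiableAt.sub ?_ ?_
    · exact (hEdiff p hp).const_mul _
    · refine DifferentiableAt.mul (DifferentiableAt.mul ?_ (hEdiff p hp)) ?_
      · exact diffat_ofreal_fst hlind
      · exact diffat_ofreal_fst (u := fun y => ∑ k, α k * G y j k)
          (DifferentiableAt.fun_sum fun k _ =>
            ((hGsm j k p.1 hp).differentiableAt (by simp)).const_mul (α k))
  have hprodd : ∀ i j, DifferentiableAt ℝ
      (fun q : (Fin n → ℝ) × (Fin n → ℝ) => ((H q.1 i j : ℝ) : ℂ) * (((b j : ℝ) : ℂ) * Complex.exp (-((∑ k, α k * pd φ k q.1 : ℝ) : ℂ) + Complex.I * ((∑ i, α i * q.2 i : ℝ) : ℂ)) - ((((∑ i, q.1 i * b i) + 1 : ℝ)) : ℂ) * Complex.exp (-((∑ k, α k * pd φ k q.1 : ℝ) : ℂ) + Complex.I * ((∑ i, α i * q.2 i : ℝ) : ℂ)) * ((∑ k, α k * G q.1 j k : ℝ) : ℂ))) p := by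
    intro i j
    exact (diffat_ofreal_fst (hHd i j p.1 hp)).mul (hWd j)
  -- Term 1
  have hT1 : ∀ i, (∑ j, pdx (fun q => ((H q.1 i j : ℝ) : ℂ) * pdx (fun q : (Fin n → ℝ) × (Fin n → ℝ) => (((∑ i, q.1 i * b i) + 1 : ℝ) : ℂ) * Complex.exp (-((∑ k, α k * pd φ k q.1 : ℝ) : ℂ) + Complex.I * ((∑ i, α i * q.2 i : ℝ) : ℂ))) j q) i p)
      = (((∑ j, pd (fun y => H y i j * b j) i p.1) - α i * b i : ℝ) : ℂ) * Complex.exp (-((∑ k, α k * pd φ k p.1 : ℝ) : ℂ) + Complex.I * ((∑ i, α i * p.2 i : ℝ) : ℂ))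
        - (((∑ j, H p.1 i j * b j) - ((∑ r, p.1 r * b r) + 1) * α i : ℝ) : ℂ) * Complex.exp (-((∑ k, α k * pd φ k p.1 : ℝ) : ℂ) + Complex.I * ((∑ i, α i * p.2 i : ℝ) : ℂ))
          * ((∑ k, α k * G p.1 i k : ℝ) : ℂ) := by
    intro i
    have ha : ∀ j, pdx (fun q => ((H q.1 i j : ℝ) : ℂ) * pdx (fun q : (Fin n → ℝ) × (Fin n → ℝ) => (((∑ i, q.1 i * b i) + 1 : ℝ) : ℂ) * Complex.exp (-((∑ k, α k * pd φ k q.1 : ℝ) : ℂ) + Complex.I * ((∑ i, α i * q.2 i : ℝ) : ℂ))) j q) i p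
        = pdx (fun q => ((H q.1 i j : ℝ) : ℂ) * (((b j : ℝ) : ℂ) * Complex.exp (-((∑ k, α k * pd φ k q.1 : ℝ) : ℂ) + Complex.I * ((∑ i, α i * q.2 i : ℝ) : ℂ)) - ((((∑ i, q.1 i * b i) + 1 : ℝ)) : ℂ) * Complex.exp (-((∑ k, α k * pd φ k q.1 : ℝ) : ℂ) + Complex.I * ((∑ i, α i * q.2 i : ℝ) : ℂ)) * ((∑ k, α k * G q.1 j k : ℝ) : ℂ))) i p := by
      intro j
      have he : (fun q : (Fin n → ℝ) × (Fin n → ℝ) =>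
            ((H q.1 i j : ℝ) : ℂ) * pdx (fun q : (Fin n → ℝ) × (Fin n → ℝ) => (((∑ i, q.1 i * b i) + 1 : ℝ) : ℂ) * Complex.exp (-((∑ k, α k * pd φ k q.1 : ℝ) : ℂ) + Complex.I * ((∑ i, α i * q.2 i : ℝ) : ℂ))) j q)
          =ᶠ[𝓝 p] (fun q => ((H q.1 i j : ℝ) : ℂ) * (((b j : ℝ) : ℂ) * Complex.exp (-((∑ k, α k * pd φ k q.1 : ℝ) : ℂ) + Complex.I * ((∑ i, α i * q.2 i : ℝ) : ℂ)) - ((((∑ i, q.1 i * b i) + 1 : ℝ)) : ℂ) * Complex.exp (-((∑ k, α k * pd φ k q.1 : ℝ) : ℂ) + Complex.I * ((∑ i, α i * q.2 i : ℝ) : ℂ)) * ((∑ k, α k * G q.1 j k : ℝ) : ℂ))) := by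
        filter_upwards [hnhds p hp] with q hq
        rw [hpdxV q hq.1 j]
      rw [pdx, pdx, he.fderiv_eq]
    rw [Finset.sum_congr rfl fun j _ => ha j]
    have hb' : ∑ j, pdx (fun q => ((H q.1 i j : ℝ) : ℂ) * (((b j : ℝ) : ℂ) * Complex.exp (-((∑ k, α k * pd φ k q.1 : ℝ) : ℂ) + Complex.I * ((∑ i, α i * q.2 i : ℝ) : ℂ)) - ((((∑ i, q.1 i * b i) + 1 : ℝ)) : ℂ) * Complex.exp (-((∑ k, α k * pd φ k q.1 : ℝ) : ℂ) + Complex.I * ((∑ i, α i * q.2 i : ℝ) : ℂ)) * ((∑ k, α k * G q.1 j k : ℝ) : ℂ))) i p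
        = pdx (fun q => ∑ j, ((H q.1 i j : ℝ) : ℂ) * (((b j : ℝ) : ℂ) * Complex.exp (-((∑ k, α k * pd φ k q.1 : ℝ) : ℂ) + Complex.I * ((∑ i, α i * q.2 i : ℝ) : ℂ)) - ((((∑ i, q.1 i * b i) + 1 : ℝ)) : ℂ) * Complex.exp (-((∑ k, α k * pd φ k q.1 : ℝ) : ℂ) + Complex.I * ((∑ i, α i * q.2 i : ℝ) : ℂ)) * ((∑ k, α k * G q.1 j k : ℝ) : ℂ))) i p := by
      simp only [pdx]
      rw [fderiv_fun_sum (fun j _ => hprodd i j), ContinuousLinearMap.sum_apply]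
    rw [hb']
    have hc : (fun q : (Fin n → ℝ) × (Fin n → ℝ) =>
          ∑ j, ((H q.1 i j : ℝ) : ℂ) * (((b j : ℝ) : ℂ) * Complex.exp (-((∑ k, α k * pd φ k q.1 : ℝ) : ℂ) + Complex.I * ((∑ i, α i * q.2 i : ℝ) : ℂ)) - ((((∑ i, q.1 i * b i) + 1 : ℝ)) : ℂ) * Complex.exp (-((∑ k, α k * pd φ k q.1 : ℝ) : ℂ) + Complex.I * ((∑ i, α i * q.2 i : ℝ) : ℂ)) * ((∑ k, α k * G q.1 j k : ℝ) : ℂ)))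
        =ᶠ[𝓝 p] (fun q => ((((∑ j, H q.1 i j * b j) - ((∑ r, q.1 r * b r) + 1) * α i : ℝ)) : ℂ)
            * Complex.exp (-((∑ k, α k * pd φ k q.1 : ℝ) : ℂ) + Complex.I * ((∑ i, α i * q.2 i : ℝ) : ℂ))) := by
      filter_upwards [hnhds p hp] with q hq
      have hre : ∑ j, H q.1 i j * (b j - ((∑ r, q.1 r * b r) + 1) * (∑ k, α k * G q.1 j k))
          = (∑ j, H q.1 i j * b j) - ((∑ r, q.1 r * b r) + 1) * α i := by
        have h4 : ∀ j, H q.1 i j * (b j - ((∑ r, q.1 r * b r) + 1) * (∑ k, α k * G q.1 j k))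
            = H q.1 i j * b j
              - ((∑ r, q.1 r * b r) + 1) * (H q.1 i j * (∑ k, α k * G q.1 j k)) := by
          intro j; ring
        rw [Finset.sum_congr rfl fun j _ => h4 j, Finset.sum_sub_distrib, ← Finset.mul_sum,
          idA q.1 hq.1 i]
      rw [← hre]
      rw [sum_ofReal_mul (fun j => H q.1 i j
        * (b j - ((∑ r, q.1 r * b r) + 1) * (∑ k, α k * G q.1 j k))) (Complex.exp (-((∑ k, α k * pd φ k q.1 : ℝ) : ℂ) + Complex.I * ((∑ i, α i * q.2 i : ℝ) : ℂ)))]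
      refine Finset.sum_congr rfl fun j _ => ?_
      push_cast
      ring
    rw [pdx, hc.fderiv_eq]
    -- now apply the master lemma with u_i
    have h1 : HasFDerivAt (fun y => ∑ j, H y i j * b j)
        (∑ j, fderiv ℝ (fun y => H y i j * b j) p.1) p.1 :=
      HasFDerivAt.fun_sum fun j _ => ((hHd i j p.1 hp).mul_const (b j)).hasFDerivAt
    have h2 : HasFDerivAt (fun y : Fin n → ℝ => ((∑ r, y r * b r) + 1) * α i)
        (α i • (∑ r, b r • (ContinuousLinearMap.proj r : (Fin n → ℝ) →L[ℝ] ℝ))) p.1 :=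
      (hasFDerivAt_lin b p.1).mul_const (α i)
    have hui : HasFDerivAt (fun y => (∑ j, H y i j * b j) - ((∑ r, y r * b r) + 1) * α i)
        ((∑ j, fderiv ℝ (fun y => H y i j * b j) p.1)
          - α i • (∑ r, b r • (ContinuousLinearMap.proj r : (Fin n → ℝ) →L[ℝ] ℝ))) p.1 :=
      h1.sub h2
    have h := (pdx_aux α (fun k => pd φ k)
      (fun y => (∑ j, H y i j * b j) - ((∑ r, y r * b r) + 1) * α i)
      ((∑ j, fderiv ℝ (fun y => H y i j * b j) p.1)
        - α i • (∑ r, b r • (ContinuousLinearMap.proj r : (Fin n → ℝ) →L[ℝ] ℝ))) p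
      (hgd p.1 hp) hui).2.2.1 i
    rw [ContinuousLinearMap.sub_apply, ContinuousLinearMap.smul_apply, lin_eval] at h
    simp only [hGa, ContinuousLinearMap.sum_apply, smul_eq_mul] at h
    exact h
  
  have hT2 : ∀ i j, pdt (fun q => pdt (fun q : (Fin n → ℝ) × (Fin n → ℝ) => (((∑ i, q.1 i * b i) + 1 : ℝ) : ℂ) * Complex.exp (-((∑ k, α k * pd φ k q.1 : ℝ) : ℂ) + Complex.I * ((∑ i, α i * q.2 i : ℝ) : ℂ))) j q) i p
      = Complex.I * ((α j : ℝ) : ℂ) * (Complex.I * ((α i : ℝ) : ℂ)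
          * ((((∑ i, p.1 i * b i) + 1 : ℝ) : ℂ) * Complex.exp (-((∑ k, α k * pd φ k p.1 : ℝ) : ℂ) + Complex.I * ((∑ i, α i * p.2 i : ℝ) : ℂ)))) := by
    intro i j
    have he : (fun q => pdt (fun q : (Fin n → ℝ) × (Fin n → ℝ) => (((∑ i, q.1 i * b i) + 1 : ℝ) : ℂ) * Complex.exp (-((∑ k, α k * pd φ k q.1 : ℝ) : ℂ) + Complex.I * ((∑ i, α i * q.2 i : ℝ) : ℂ))) j q) =ᶠ[𝓝 p]
        (fun q : (Fin n → ℝ) × (Fin n → ℝ) => Complex.I * ((α j : ℝ) : ℂ)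
          * ((((∑ i, q.1 i * b i) + 1 : ℝ) : ℂ) * Complex.exp (-((∑ k, α k * pd φ k q.1 : ℝ) : ℂ) + Complex.I * ((∑ i, α i * q.2 i : ℝ) : ℂ)))) := by
      filter_upwards [hnhds p hp] with q hq
      exact hpdtV q hq.1 j
    rw [pdt, he.fderiv_eq, fderiv_const_mul (hVdiff p hp) (Complex.I * ((α j : ℝ) : ℂ))]
    rw [ContinuousLinearMap.smul_apply, smul_eq_mul]
    have hx : fderiv ℝ (fun q : (Fin n → ℝ) × (Fin n → ℝ) => (((∑ i, q.1 i * b i) + 1 : ℝ) : ℂ) * Complex.exp (-((∑ k, α k * pd φ k q.1 : ℝ) : ℂ) + Complex.I * ((∑ i, α i * q.2 i : ℝ) : ℂ))) p ((0 : Fin n → ℝ), Pi.single i 1)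
        = Complex.I * ((α i : ℝ) : ℂ) * ((((∑ i, p.1 i * b i) + 1 : ℝ) : ℂ) * Complex.exp (-((∑ k, α k * pd φ k p.1 : ℝ) : ℂ) + Complex.I * ((∑ i, α i * p.2 i : ℝ) : ℂ))) :=
      hpdtV p hp i
    rw [hx]
  have hT3 := hpdxV p hp
  have hT4 := hpdtV p hp
  simp only [Lop]
  rw [Finset.sum_congr rfl fun i _ => hT1 i]
  simp only [hT2, hT3, hT4]
  
  have hS1 : ∑ i, ((((∑ j, pd (fun y => H y i j * b j) i p.1) - α i * b i : ℝ) : ℂ) * Complex.exp (-((∑ k, α k * pd φ k p.1 : ℝ) : ℂ) + Complex.I * ((∑ i, α i * p.2 i : ℝ) : ℂ))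
        - (((∑ j, H p.1 i j * b j) - ((∑ r, p.1 r * b r) + 1) * α i : ℝ) : ℂ) * Complex.exp (-((∑ k, α k * pd φ k p.1 : ℝ) : ℂ) + Complex.I * ((∑ i, α i * p.2 i : ℝ) : ℂ))
          * ((∑ k, α k * G p.1 i k : ℝ) : ℂ))
      = ((∑ i, ((∑ j, pd (fun y => H y i j * b j) i p.1) - α i * b i - ((∑ j, H p.1 i j * b j) - ((∑ r, p.1 r * b r) + 1) * α i) * (∑ k, α k * G p.1 i k)) : ℝ) : ℂ) * Complex.exp (-((∑ k, α k * pd φ k p.1 : ℝ) : ℂ) + Complex.I * ((∑ i, α i * p.2 i : ℝ) : ℂ)) := by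
    rw [sum_ofReal_mul]
    refine Finset.sum_congr rfl fun i _ => ?_
    push_cast
    ring
  have hS2 : ∑ i, ∑ j, ((G p.1 i j : ℝ) : ℂ) * (Complex.I * ((α j : ℝ) : ℂ)
        * (Complex.I * ((α i : ℝ) : ℂ) * ((((∑ r, p.1 r * b r) + 1 : ℝ) : ℂ) * Complex.exp (-((∑ k, α k * pd φ k p.1 : ℝ) : ℂ) + Complex.I * ((∑ i, α i * p.2 i : ℝ) : ℂ)))))
      = -(((∑ i, ∑ j, G p.1 i j * (α j * α i * ((∑ r, p.1 r * b r) + 1)) : ℝ) : ℂ) * Complex.exp (-((∑ k, α k * pd φ k p.1 : ℝ) : ℂ) + Complex.I * ((∑ i, α i * p.2 i : ℝ) : ℂ))) := by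
    rw [sum_ofReal_mul, ← Finset.sum_neg_distrib]
    refine Finset.sum_congr rfl fun i _ => ?_
    rw [sum_ofReal_mul, ← Finset.sum_neg_distrib]
    refine Finset.sum_congr rfl fun j _ => ?_
    push_cast
    linear_combination (norm := (push_cast; ring1)) ((G p.1 i j : ℝ) : ℂ) * ((α j : ℝ) : ℂ) * ((α i : ℝ) : ℂ)
      * ((((∑ r, p.1 r * b r) + 1 : ℝ)) : ℂ) * Complex.exp (-((∑ k, α k * pd φ k p.1 : ℝ) : ℂ) + Complex.I * ((∑ i, α i * p.2 i : ℝ) : ℂ)) * Complex.I_mul_I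
  have hS3 : ∑ i, ∑ j, ((a i : ℝ) : ℂ) * ((H p.1 i j : ℝ) : ℂ)
        * (((b j : ℝ) : ℂ) * Complex.exp (-((∑ k, α k * pd φ k p.1 : ℝ) : ℂ) + Complex.I * ((∑ i, α i * p.2 i : ℝ) : ℂ))
          - ((((∑ r, p.1 r * b r) + 1 : ℝ)) : ℂ) * Complex.exp (-((∑ k, α k * pd φ k p.1 : ℝ) : ℂ) + Complex.I * ((∑ i, α i * p.2 i : ℝ) : ℂ)) * ((∑ k, α k * G p.1 j k : ℝ) : ℂ))
      = ((∑ i, ∑ j, a i * H p.1 i j * (b j - ((∑ r, p.1 r * b r) + 1) * (∑ k, α k * G p.1 j k)) : ℝ) : ℂ) * Complex.exp (-((∑ k, α k * pd φ k p.1 : ℝ) : ℂ) + Complex.I * ((∑ i, α i * p.2 i : ℝ) : ℂ)) := by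
    rw [sum_ofReal_mul]
    refine Finset.sum_congr rfl fun i _ => ?_
    rw [sum_ofReal_mul]
    refine Finset.sum_congr rfl fun j _ => ?_
    push_cast
    ring
  have hS4 : ∑ j, ((a j : ℝ) : ℂ) * (Complex.I * ((α j : ℝ) : ℂ)
        * (((((∑ r, p.1 r * b r) + 1 : ℝ)) : ℂ) * Complex.exp (-((∑ k, α k * pd φ k p.1 : ℝ) : ℂ) + Complex.I * ((∑ i, α i * p.2 i : ℝ) : ℂ))))
      = Complex.I * (((∑ j, a j * (α j * ((∑ r, p.1 r * b r) + 1)) : ℝ) : ℂ) * Complex.exp (-((∑ k, α k * pd φ k p.1 : ℝ) : ℂ) + Complex.I * ((∑ i, α i * p.2 i : ℝ) : ℂ))) := by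
    rw [sum_ofReal_mul, Finset.mul_sum]
    refine Finset.sum_congr rfl fun j _ => ?_
    push_cast
    ring
  rw [hS1, hS2, hS3, hS4]
  
  have eA : (∑ i, ((∑ j, pd (fun y => H y i j * b j) i p.1) - α i * b i - ((∑ j, H p.1 i j * b j) - ((∑ r, p.1 r * b r) + 1) * α i) * (∑ k, α k * G p.1 i k)))
      = (∑ i, ∑ j, pd (fun y => H y i j * b j) i p.1) - (∑ i, α i * b i)
        - ((∑ i, (∑ j, H p.1 i j * b j) * (∑ k, α k * G p.1 i k))
          - ((∑ r, p.1 r * b r) + 1) * (∑ i, α i * (∑ k, α k * G p.1 i k))) := by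
    rw [show (∑ i, ((∑ j, pd (fun y => H y i j * b j) i p.1) - α i * b i - ((∑ j, H p.1 i j * b j) - ((∑ r, p.1 r * b r) + 1) * α i) * (∑ k, α k * G p.1 i k))) = ∑ i, ((∑ j, pd (fun y => H y i j * b j) i p.1) - α i * b i
        - ((∑ j, H p.1 i j * b j) * (∑ k, α k * G p.1 i k)
          - ((∑ r, p.1 r * b r) + 1) * (α i * (∑ k, α k * G p.1 i k)))) from
      Finset.sum_congr rfl fun i _ => by ring]
    simp only [Finset.sum_sub_distrib]
    rw [← Finset.mul_sum]
  have eB : (∑ i, ∑ j, G p.1 i j * (α j * α i * ((∑ r, p.1 r * b r) + 1)))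
      = ((∑ r, p.1 r * b r) + 1) * (∑ i, α i * (∑ k, α k * G p.1 i k)) := by
    simp only [Finset.mul_sum]
    refine Finset.sum_congr rfl fun i _ => Finset.sum_congr rfl fun j _ => by ring
  have eC : (∑ i, ∑ j, a i * H p.1 i j * (b j - ((∑ r, p.1 r * b r) + 1) * (∑ k, α k * G p.1 j k)))
      = (∑ i, ∑ j, a i * H p.1 i j * b j)
        - ((∑ r, p.1 r * b r) + 1) * (∑ i, a i * α i) := by
    have h5 : ∀ i, ∑ j, a i * H p.1 i j * (b j - ((∑ r, p.1 r * b r) + 1) * (∑ k, α k * G p.1 j k))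
        = (∑ j, a i * H p.1 i j * b j)
          - ((∑ r, p.1 r * b r) + 1) * (a i * (∑ j, H p.1 i j * (∑ k, α k * G p.1 j k))) := by
      intro i
      rw [Finset.mul_sum, Finset.mul_sum, ← Finset.sum_sub_distrib]
      exact Finset.sum_congr rfl fun j _ => by ring
    rw [Finset.sum_congr rfl fun i _ => h5 i]
    simp only [idA p.1 hp]
    rw [Finset.sum_sub_distrib, ← Finset.mul_sum]
  have eD : (∑ j, a j * (α j * ((∑ r, p.1 r * b r) + 1))) = ((∑ r, p.1 r * b r) + 1) * (∑ j, a j * α j) := by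
    rw [Finset.mul_sum]
    exact Finset.sum_congr rfl fun j _ => by ring
  have key : -(∑ i, ((∑ j, pd (fun y => H y i j * b j) i p.1) - α i * b i - ((∑ j, H p.1 i j * b j) - ((∑ r, p.1 r * b r) + 1) * α i) * (∑ k, α k * G p.1 i k))) + (∑ i, ∑ j, G p.1 i j * (α j * α i * ((∑ r, p.1 r * b r) + 1))) + 2*(∑ i, ∑ j, a i * H p.1 i j * (b j - ((∑ r, p.1 r * b r) + 1) * (∑ k, α k * G p.1 j k))) + 2*(∑ j, a j * (α j * ((∑ r, p.1 r * b r) + 1)))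
      = 2*((∑ r, p.1 r * b r) + 1) := by
    rw [eA, eB, eC, eD, hαb, idB p.1 hp]
    have hsol := hsoliton p.1 hp
    linarith [hsol]
  have keyC : ((-(∑ i, ((∑ j, pd (fun y => H y i j * b j) i p.1) - α i * b i - ((∑ j, H p.1 i j * b j) - ((∑ r, p.1 r * b r) + 1) * α i) * (∑ k, α k * G p.1 i k))) + (∑ i, ∑ j, G p.1 i j * (α j * α i * ((∑ r, p.1 r * b r) + 1))) + 2*(∑ i, ∑ j, a i * H p.1 i j * (b j - ((∑ r, p.1 r * b r) + 1) * (∑ k, α k * G p.1 j k))) + 2*(∑ j, a j * (α j * ((∑ r, p.1 r * b r) + 1))) : ℝ) : ℂ)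
      = ((2*((∑ r, p.1 r * b r) + 1) : ℝ) : ℂ) := congrArg Complex.ofReal key
  linear_combination (norm := (push_cast; ring1)) Complex.exp (-((∑ k, α k * pd φ k p.1 : ℝ) : ℂ) + Complex.I * ((∑ i, α i * p.2 i : ℝ) : ℂ)) * keyC
    - 2*(((∑ j, a j * (α j * ((∑ r, p.1 r * b r) + 1))) : ℝ) : ℂ) * Complex.exp (-((∑ k, α k * pd φ k p.1 : ℝ) : ℂ) + Complex.I * ((∑ i, α i * p.2 i : ℝ) : ℂ)) * Complex.I_mul_I
end

section
/- Let b_1, …, b_d ∈ ℝⁿ, set ℓ_r(x) = ⟨x, b_r⟩ + 1, let Ω = {x ∈ ℝⁿ : ℓ_r(x) > 0 for all r} and P = {x ∈ ℝⁿ : ℓ_r(x) ≥ 0 for all r}, and define the Guillemin potential φ₀ : Ω → ℝ by φ₀(x) = (1/2) Σ_{r=1}^d ℓ_r(x) log ℓ_r(x). Let α ∈ ℝⁿ and let r₀ ∈ {1,…,d} satisfy ⟨α, b_{r₀}⟩ = 1 and ⟨α, b_r⟩ ≤ 0 for all r ≠ r₀. Then for every x ∈ Ω, ℓ_{r₀}(x)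 · exp(−⟨α, ∇φ₀(x)⟩) = exp(−(1/2) Σ_{r=1}^d ⟨α, b_r⟩) · ℓ_{r₀}(x)^{1/2} · Π_{r ≠ r₀} ℓ_r(x)^{−(1/2)⟨α, b_r⟩}, and the right-hand side defines a continuous function on all of P (with the convention 0^c = 0 for c > 0 and 0^0 = 1); in particular the left-hand side extends continuously from Ω to P. -/
/-!
Differentiating `φ₀ = ½ Σ ℓ_r log ℓ_r` gives `⟨α, ∇φ₀⟩ = ½ Σ_r (log ℓ_r + 1) ⟨α, b_r⟩`, so
`exp(-⟨α, ∇φ₀⟩)` is `exp(-½ Σ_r ⟨α, b_r⟩)` times the product of the powers `ℓ_r^{-½⟨α, b_r⟩}`.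
Since `⟨α, b_{r₀}⟩ = 1`, the prefactor `ℓ_{r₀}` turns the `r₀`-th power into `ℓ_{r₀}^{1/2}`, and
all exponents left are then nonnegative; a nonnegative real power is continuous up to `0`.
-/

open Real Finset

theorem hasFDerivAt_sum_mul_add {ι : Type*} [Fintype ι] (w : ι → ℝ) (a : ℝ) (x : ι → ℝ) :
    HasFDerivAt (fun y : ι → ℝ => ∑ i, y i * w i + a)
      (∑ i, w i • ContinuousLinearMap.proj (R := ℝ) (φ := fun _ : ι => ℝ) i) x :=
  (HasFDerivAt.fun_sum fun i _ =>
    (hasFDerivAt_apply (F' := fun _ => ℝ) i x).mul_const (w i)).add_const a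

theorem sum_mul_pd_eq_fderiv {n : ℕ} (f : (Fin n → ℝ) → ℝ) (α x : Fin n → ℝ) :
    ∑ i, α i * pd f i x = fderiv ℝ f x α := by
  conv_rhs => rw [pi_eq_sum_univ' α]
  simp only [map_sum, map_smul, smul_eq_mul, pd]

section Guillemin

variable {E : Type*} [NormedAddCommGroup E] [NormedSpace ℝ E] {ι : Type*} [Fintype ι]

theorem hasFDerivAt_mul_log {f : E → ℝ} {f' : E →L[ℝ] ℝ} {x : E} (hf : HasFDerivAt f f' x)
    (hx : f x ≠ 0) :
    HasFDerivAt (fun y => f y * log (f y)) ((log (f x) + 1) • f') x :=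
  (hasDerivAt_mul_log hx).comp_hasFDerivAt x hf

theorem hasFDerivAt_half_sum_mul_log {ℓ : ι → E → ℝ} {L : ι → E →L[ℝ] ℝ} {x : E}
    (hℓ : ∀ r, HasFDerivAt (ℓ r) (L r) x) (hx : ∀ r, ℓ r x ≠ 0) :
    HasFDerivAt (fun y => 1 / 2 * ∑ r, ℓ r y * log (ℓ r y))
      ((1 / 2 : ℝ) • ∑ r, (log (ℓ r x) + 1) • L r) x :=
  (HasFDerivAt.fun_sum fun r _ => hasFDerivAt_mul_log (hℓ r) (hx r)).const_mul _

end Guillemin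

theorem exp_neg_half_sum_log_add_one_mul {ι : Type*} [Fintype ι] {ℓ : ι → ℝ} (hℓ : ∀ r, 0 < ℓ r)
    (c : ι → ℝ) :
    exp (-(1 / 2 * ∑ r, (log (ℓ r) + 1) * c r))
      = exp (-(1 / 2) * ∑ r, c r) * ∏ r, ℓ r ^ (-(1 / 2) * c r) := by
  have hsplit : -(1 / 2 * ∑ r, (log (ℓ r) + 1) * c r)
      = -(1 / 2) * ∑ r, c r + ∑ r, log (ℓ r) * (-(1 / 2) * c r) := by
    simp only [mul_sum, ← sum_neg_distrib, ← sum_add_distrib]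
    exact sum_congr rfl fun r _ => by ring
  rw [hsplit, exp_add, exp_sum]
  simp only [← rpow_def_of_pos (hℓ _)]

theorem mul_prod_rpow_neg_half_mul {ι : Type*} [Fintype ι] [DecidableEq ι] {ℓ : ι → ℝ}
    {r₀ : ι} (hr₀ : 0 < ℓ r₀) {c : ι → ℝ} (hc : c r₀ = 1) :
    ℓ r₀ * ∏ r, ℓ r ^ (-(1 / 2) * c r)
      = ℓ r₀ ^ (1 / 2 : ℝ) * ∏ r ∈ univ.erase r₀, ℓ r ^ (-(1 / 2) * c r) := by
  have hhalf : ℓ r₀ * ℓ r₀ ^ (-(1 / 2) : ℝ) = ℓ r₀ ^ (1 / 2 : ℝ) := by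
    rw [← rpow_one_add' hr₀.le (by norm_num)]
    norm_num
  rw [← mul_prod_erase univ _ (mem_univ r₀), hc, mul_one, ← mul_assoc, hhalf]

theorem stmt11_general {n d : ℕ} (b : Fin d → (Fin n → ℝ)) (α : Fin n → ℝ) (r₀ : Fin d)
    (hroot1 : ∑ i, α i * b r₀ i = 1)
    (hroot2 : ∀ r, r ≠ r₀ → ∑ i, α i * b r i ≤ 0)
    (ℓ : Fin d → (Fin n → ℝ) → ℝ)
    (hℓ : ∀ r x, ℓ r x = (∑ i, x i * b r i) + 1)
    (Ω P : Set (Fin n → ℝ))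
    (hΩ : Ω = {x | ∀ r, 0 < ℓ r x})
    (φ₀ : (Fin n → ℝ) → ℝ)
    (hφ₀ : ∀ x, φ₀ x = (1 / 2) * ∑ r, ℓ r x * Real.log (ℓ r x))
    (F : (Fin n → ℝ) → ℝ)
    (hF : ∀ x, F x = Real.exp (-(1 / 2) * ∑ r, ∑ i, α i * b r i)
        * (ℓ r₀ x) ^ ((1 : ℝ) / 2)
        * ∏ r ∈ Finset.univ.erase r₀, (ℓ r x) ^ (-(1 / 2) * ∑ i, α i * b r i)) :
    (∀ x ∈ Ω, ℓ r₀ x * Real.exp (-(∑ i, α i * pd φ₀ i x)) = F x)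
    ∧ ContinuousOn F P
    ∧ ∃ g : (Fin n → ℝ) → ℝ, ContinuousOn g P ∧
        ∀ x ∈ Ω, g x = ℓ r₀ x * Real.exp (-(∑ i, α i * pd φ₀ i x)) := by
  have hℓ_fun : ∀ r, ℓ r = fun y => ∑ i, y i * b r i + 1 := fun r => funext (hℓ r)
  have hF_eq : ∀ x ∈ Ω, ℓ r₀ x * exp (-(∑ i, α i * pd φ₀ i x)) = F x := by
    intro x hx
    have hpos : ∀ r, 0 < ℓ r x := by rwa [hΩ] at hx
    have hφ₀_deriv := hasFDerivAt_half_sum_mul_log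
      (fun r => by rw [hℓ_fun r]; exact hasFDerivAt_sum_mul_add (b r) 1 x) fun r => (hpos r).ne'
    rw [sum_mul_pd_eq_fderiv, funext hφ₀, hφ₀_deriv.fderiv]
    simp only [_root_.smul_apply, _root_.sum_apply,
      ContinuousLinearMap.proj_apply, smul_eq_mul, mul_comm (b _ _) (α _)]
    rw [exp_neg_half_sum_log_add_one_mul hpos, mul_left_comm,
      mul_prod_rpow_neg_half_mul (ℓ := fun r => ℓ r x)
      (c := fun r => ∑ i, α i * b r i) (hpos r₀) hroot1, ← mul_assoc, hF]
  have hF_cont : Continuous F := by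
    have hℓ_cont : ∀ r, Continuous (ℓ r) := fun r => by rw [hℓ_fun r]; fun_prop
    rw [funext hF]
    refine (continuous_const.mul ((hℓ_cont r₀).rpow_const fun _ => Or.inr (by norm_num))).mul
      (continuous_finsetProd _ fun r hr => (hℓ_cont r).rpow_const fun _ => Or.inr ?_)
    nlinarith [hroot2 r (ne_of_mem_erase hr)]
  exact ⟨hF_eq, hF_cont.continuousOn, F, hF_cont.continuousOn, fun x hx => (hF_eq x hx).symm⟩

/-- Boundary-extension computation for the torus-invariant factor of a root function:
on the interior `Ω` of the polytope `P`, `ℓ_{r₀}·exp(-⟨α,∇φ₀⟩)` equals the explicit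
product of powers of the defining functions, which is continuous on all of `P`
(real powers `x ^ (c : ℝ)` satisfying `0 ^ c = 0` for `c ≠ 0` and `0 ^ 0 = 1`);
in particular the left-hand side extends continuously from `Ω` to `P`. -/
theorem stmt11 {n d : ℕ} (b : Fin d → (Fin n → ℝ)) (α : Fin n → ℝ) (r₀ : Fin d)
    (hroot1 : ∑ i, α i * b r₀ i = 1)
    (hroot2 : ∀ r, r ≠ r₀ → ∑ i, α i * b r i ≤ 0)
    (ℓ : Fin d → (Fin n → ℝ) → ℝ)
    (hℓ : ∀ r x, ℓ r x = (∑ i, x i * b r i) + 1)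
    (Ω P : Set (Fin n → ℝ))
    (hΩ : Ω = {x | ∀ r, 0 < ℓ r x})
    (hP : P = {x | ∀ r, 0 ≤ ℓ r x})
    (φ₀ : (Fin n → ℝ) → ℝ)
    (hφ₀ : ∀ x, φ₀ x = (1 / 2) * ∑ r, ℓ r x * Real.log (ℓ r x))
    (F : (Fin n → ℝ) → ℝ)
    (hF : ∀ x, F x = Real.exp (-(1 / 2) * ∑ r, ∑ i, α i * b r i)
        * (ℓ r₀ x) ^ ((1 : ℝ) / 2)
        * ∏ r ∈ Finset.univ.erase r₀, (ℓ r x) ^ (-(1 / 2) * ∑ i, α i * b r i)) :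
    (∀ x ∈ Ω, ℓ r₀ x * Real.exp (-(∑ i, α i * pd φ₀ i x)) = F x)
    ∧ ContinuousOn F P
    ∧ ∃ g : (Fin n → ℝ) → ℝ, ContinuousOn g P ∧
        ∀ x ∈ Ω, g x = ℓ r₀ x * Real.exp (-(∑ i, α i * pd φ₀ i x)) :=
  stmt11_general b α r₀ hroot1 hroot2 ℓ hℓ Ω P hΩ φ₀ hφ₀ F hF
end

section
/- Let a ∈ ℝ with a ≠ 0 and define A : ℝ → ℝ by A(x) = −(1/a³) [ (a² − 1/2) exp(−2a(x−1)) + a² x² − (2a² + a) x + (a + 1/2) ]. Then: (i) A''(x) + 2a A'(x) = 4 − 4x for all x ∈ ℝ; (ii) A(1) = 0 and A'(1) = 2; (iii) if moreover (a² − 1/2) exp(−4a) + 3a² − 2a + 1/2 = 0, then A(3) = 0 and A'(3) = −6. -/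
/-!
Every function `x ↦ p e^{k(x-x₀)} + q x² + r x + s` differentiates to a function of the same
shape, and the exponential mode lies in the kernel of `D² - k D`, so `A'' - k A'` is the affine
function `2q - k(2qx + r)`. With `k = -2a` this is `4 - 4x` for the coefficients of `A`; the
boundary values are then direct evaluations, at `x = 3` using the hypothesis to eliminate
`(a² - 1/2) e^{-4a}`.
-/

open Real

noncomputable def expQuad (p k x₀ q r s : ℝ) (x : ℝ) : ℝ :=
  p * exp (k * (x - x₀)) + q * x ^ 2 + r * x + s

theorem hasDerivAt_expQuad (p k x₀ q r s x : ℝ) :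
    HasDerivAt (expQuad p k x₀ q r s) (expQuad (p * k) k x₀ 0 (2 * q) r x) x := by
  have hexp : HasDerivAt (fun x => exp (k * (x - x₀))) (exp (k * (x - x₀)) * k) x := by
    simpa using (((hasDerivAt_id x).sub_const x₀).const_mul k).exp
  refine ((((hexp.const_mul p).add ((hasDerivAt_pow 2 x).const_mul q)).add
    ((hasDerivAt_id x).const_mul r)).add_const s).congr_deriv ?_
  simp only [expQuad, Nat.cast_ofNat, Nat.add_one_sub_one, pow_one]
  ring

theorem deriv_expQuad (p k x₀ q r s : ℝ) :
    deriv (expQuad p k x₀ q r s) = expQuad (p * k) k x₀ 0 (2 * q) r :=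
  funext fun x => (hasDerivAt_expQuad p k x₀ q r s x).deriv

theorem deriv_deriv_expQuad (p k x₀ q r s x : ℝ) :
    deriv (deriv (expQuad p k x₀ q r s)) x
      = k * deriv (expQuad p k x₀ q r s) x + (2 * q - k * (2 * q * x + r)) := by
  simp only [deriv_expQuad, expQuad]
  ring

/-- Explicit solution of the soliton ODE on `ℂP²` blown up at one point:
`A(x) = -(1/a³)[(a² - 1/2)·exp(-2a(x-1)) + a²x² - (2a² + a)x + (a + 1/2)]` satisfies
(i) `A'' + 2aA' = 4 - 4x`, (ii) `A(1) = 0`, `A'(1) = 2`, and (iii) if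
`(a² - 1/2)e^{-4a} + 3a² - 2a + 1/2 = 0` then `A(3) = 0` and `A'(3) = -6`. -/
theorem stmt12 (a : ℝ) (ha : a ≠ 0) (A : ℝ → ℝ)
    (hA : ∀ x, A x = -(1 / a ^ 3) *
      ((a ^ 2 - 1 / 2) * Real.exp (-2 * a * (x - 1)) + a ^ 2 * x ^ 2
        - (2 * a ^ 2 + a) * x + (a + 1 / 2))) :
    (∀ x, deriv (deriv A) x + 2 * a * deriv A x = 4 - 4 * x)
    ∧ (A 1 = 0 ∧ deriv A 1 = 2)
    ∧ ((a ^ 2 - 1 / 2) * Real.exp (-4 * a) + 3 * a ^ 2 - 2 * a + 1 / 2 = 0 →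
        A 3 = 0 ∧ deriv A 3 = -6) := by
  obtain rfl : A = expQuad (-(a ^ 2 - 1 / 2) / a ^ 3) (-2 * a) 1 (-1 / a)
      ((2 * a ^ 2 + a) / a ^ 3) (-(a + 1 / 2) / a ^ 3) := by
    funext x
    rw [hA, expQuad]
    field_simp
    ring
  refine ⟨fun x => ?_, ?_, fun h => ?_⟩
  · rw [deriv_deriv_expQuad]
    field_simp
    ring
  · simp only [deriv_expQuad, expQuad, sub_self, mul_zero, exp_zero]
    constructor <;> field_simp <;> ring
  · simp only [deriv_expQuad, expQuad]
    rw [show -2 * a * ((3 : ℝ) - 1) = -4 * a by ring]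
    generalize exp (-4 * a) = E at h ⊢
    constructor
    · field_simp
      linear_combination (-2 : ℝ) * h
    · field_simp
      linear_combination 2 * h
end

section
/- There exists a real number a with −1 < a < 0 such that (a² − 1/2) exp(−4a) + 3a² − 2a + 1/2 = 0. -/
/-!
The left-hand side `f` of the equation is continuous with `f(-1/2) = (9 - e²)/4 > 0`, while
`f(-1/10) < 0`; the intermediate value theorem gives a root in between. Since `f(a) = 4a³/3 + O(a⁴)`
at the trivial root `a = 0`, the sign at `-1/10` is delicate: it needs the cubic Taylor bound for
`exp`.
-/

open Real Set

lemma Real.cubic_le_exp_of_nonneg {x : ℝ} (hx : 0 ≤ x) :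
    1 + x + x ^ 2 / 2 + x ^ 3 / 6 ≤ exp x := by
  calc
    1 + x + x ^ 2 / 2 + x ^ 3 / 6 = ∑ i ∈ Finset.range 4, x ^ i / i.factorial := by
      norm_num [Finset.sum_range_succ, Nat.factorial]
    _ ≤ exp x := sum_le_exp_of_nonneg hx 4

noncomputable def solitonEquation (a : ℝ) : ℝ :=
  (a ^ 2 - 1 / 2) * exp (-4 * a) + 3 * a ^ 2 - 2 * a + 1 / 2

lemma continuous_solitonEquation : Continuous solitonEquation := by
  unfold solitonEquation
  fun_prop

lemma solitonEquation_neg_half_pos : 0 < solitonEquation (-1 / 2) := by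
  have h_exp_two : exp 2 = exp 1 * exp 1 := by rw [← exp_add]; norm_num
  have h_exp_one : exp 1 < 3 := exp_one_lt_three
  norm_num [solitonEquation, h_exp_two]
  nlinarith [exp_pos 1]

lemma solitonEquation_neg_tenth_neg : solitonEquation (-1 / 10) < 0 := by
  have h := cubic_le_exp_of_nonneg (by norm_num : (0 : ℝ) ≤ 2 / 5)
  norm_num [solitonEquation] at h ⊢
  linarith

/-- Equation (49): there is a real number `a ∈ (-1, 0)` with
`(a² - 1/2)e^{-4a} + 3a² - 2a + 1/2 = 0`. -/
theorem stmt13 :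
    ∃ a : ℝ, -1 < a ∧ a < 0 ∧
      (a ^ 2 - 1 / 2) * Real.exp (-4 * a) + 3 * a ^ 2 - 2 * a + 1 / 2 = 0 := by
  obtain ⟨a, ⟨ha_lo, ha_hi⟩, h_root⟩ :=
    intermediate_value_Ioo' (by norm_num) continuous_solitonEquation.continuousOn
      ⟨solitonEquation_neg_tenth_neg, solitonEquation_neg_half_pos⟩
  exact ⟨a, by linarith, by linarith, h_root⟩
end
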